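/- arXiv:1003.1566 — 6 statements merged into one kernel-verified Lean document; each statement's English description precedes it below -/
import Mathlib

section
/- Let λ ∈ (−π/2, π/2). For every f ∈ F_λ there exists a unique starlike function g ∈ S* such that L_f(z) = e^{iλ}·(cos λ)·L_g(z) for all z ∈ 𝔻, where L_f and L_g are the unique analytic branches of log(f(z)/z) and log(g(z)/z) on 𝔻 vanishing at 0; equivalently, f(z)/z = (g(z)/z)^{e^{iλ} cos λ} with the branch of the power taking the value 1 at z = 0. Moreover the correspondence f ↦ g is a bijection from F_λ onto S*. -/
open Set Metric

/-- The class `F_λ` of (normalized) `λ`-spirallike functions on the unit disk: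
analytic with `f 0 = 0`, `f' 0 = 1`, non-vanishing on the punctured disk, and
`Re(e^{−iλ}·z·f'(z)/f(z)) > 0` there.  `SpiralClass 0` is the class `S*` of
starlike functions. -/
def SpiralClass (lam : ℝ) : Set (ℂ → ℂ) :=
  {f | DifferentiableOn ℂ f (ball (0 : ℂ) 1) ∧ f 0 = 0 ∧ deriv f 0 = 1 ∧
    (∀ z ∈ ball (0 : ℂ) 1, z ≠ 0 → f z ≠ 0) ∧
    ∀ z ∈ ball (0 : ℂ) 1, z ≠ 0 →
      0 < (Complex.exp (-(lam : ℂ) * Complex.I) * z * deriv f z / f z).re}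

/-- `L` is the (unique) analytic branch of `log (f z / z)` on the disk vanishing at `0`. -/
def IsLogBranch (f L : ℂ → ℂ) : Prop :=
  DifferentiableOn ℂ L (ball (0 : ℂ) 1) ∧ L 0 = 0 ∧
    ∀ z ∈ ball (0 : ℂ) 1, z ≠ 0 → Complex.exp (L z) = f z / z

/-- `f ∈ F_λ` and `g ∈ S*` correspond to each other:
`L_f = e^{iλ}·cos λ · L_g` on the disk, i.e. `f(z)/z = (g(z)/z)^{e^{iλ} cos λ}`. -/
def SpiralCorrespond (lam : ℝ) (f g : ℂ → ℂ) : Prop :=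
  ∃ Lf Lg : ℂ → ℂ, IsLogBranch f Lf ∧ IsLogBranch g Lg ∧
    ∀ z ∈ ball (0 : ℂ) 1,
      Lf z = Complex.exp ((lam : ℂ) * Complex.I) * (Real.cos lam : ℂ) * Lg z

/-!
Writing `f z = z * exp (L z)`, one has `z f'/f = 1 + z L'`, so the condition defining `F_λ`
reads `0 < Re (e^{-iλ} (1 + z L'))`. When `L_f = e^{iλ} cos λ · L_g` this real part is
`cos λ · Re (1 + z L_g')`, hence `f ∈ F_λ ↔ g ∈ S*` because `cos λ > 0`. Log branches exist
(a primitive of the logarithmic derivative of `f z / z` on the disk, by Morera) and are unique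
(two of them have equal exponentials, hence equal derivatives, and agree at `0`), so
`L_f ↦ L_f / (e^{iλ} cos λ)` is the required bijection.
-/

open Complex

theorem IsOpen.eqOn_of_exp_eqOn {U : Set ℂ} (hU : IsOpen U) (hU' : IsPreconnected U)
    {L₁ L₂ : ℂ → ℂ} (h₁ : DifferentiableOn ℂ L₁ U) (h₂ : DifferentiableOn ℂ L₂ U)
    (hexp : ∀ z ∈ U, exp (L₁ z) = exp (L₂ z)) {c : ℂ} (hc : c ∈ U) (hLc : L₁ c = L₂ c) :
    EqOn L₁ L₂ U := by
  refine hU.eqOn_of_deriv_eq hU' h₁ h₂ (fun z hz => ?_) hc hLc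
  have hd₁ := (h₁.differentiableAt (hU.mem_nhds hz)).hasDerivAt.cexp
  have hd₂ := (h₂.differentiableAt (hU.mem_nhds hz)).hasDerivAt.cexp
  have hexp_near : (fun w => exp (L₁ w)) =ᶠ[nhds z] fun w => exp (L₂ w) :=
    Filter.eventuallyEq_of_mem (hU.mem_nhds hz) hexp
  have := (hd₁.congr_of_eventuallyEq hexp_near.symm).unique hd₂
  rw [hexp z hz] at this
  exact mul_left_cancel₀ (exp_ne_zero _) this

theorem Complex.exists_differentiableOn_exp_eq {h : ℂ → ℂ} {c : ℂ} {r : ℝ}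
    (hd : DifferentiableOn ℂ h (ball c r)) (hne : ∀ z ∈ ball c r, h z ≠ 0) :
    ∃ L : ℂ → ℂ, DifferentiableOn ℂ L (ball c r) ∧ L c = log (h c) ∧
      ∀ z ∈ ball c r, exp (L z) = h z := by
  have hd' : DifferentiableOn ℂ (deriv h) (ball c r) :=
    ((hd.analyticOnNhd isOpen_ball).deriv).differentiableOn
  obtain ⟨L, hLc, hL⟩ := ((hd'.div hd hne).isExactOn_ball).with_val_at c (log (h c))
  refine ⟨L, fun z hz => (hL z hz).differentiableAt.differentiableWithinAt, hLc, fun z hz => ?_⟩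
  have hc : c ∈ ball c r := mem_ball_self (pos_of_mem_ball hz)
  -- `h · exp (-L)` has derivative `h' e^{-L} - h e^{-L} h'/h = 0`, so it is constant.
  have hderiv : ∀ w ∈ ball c r, HasDerivAt (fun w => h w * exp (-L w)) 0 w := by
    intro w hw
    have : HasDerivAt (fun w => h w * exp (-L w))
        (deriv h w * exp (-L w) + h w * (exp (-L w) * -(deriv h w / h w))) w :=
      (hd.differentiableAt (isOpen_ball.mem_nhds hw)).hasDerivAt.mul (hL w hw).neg.cexp
    convert this using 1
    field_simp [hne w hw]
    ring
  have hconst := isOpen_ball.is_const_of_deriv_eq_zero (convex_ball c r).isPreconnected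
    (fun w hw => (hderiv w hw).differentiableAt.differentiableWithinAt)
    (fun w hw => (hderiv w hw).deriv) hz hc
  rw [hLc, exp_neg, exp_neg, exp_log (hne c hc), mul_inv_cancel₀ (hne c hc)] at hconst
  exact (eq_of_mul_inv_eq_one hconst).symm

theorem re_exp_neg_mul_I_mul_one_add (lam : ℝ) (w : ℂ) :
    (exp (-(lam : ℂ) * I) * (1 + exp (lam * I) * Real.cos lam * w)).re =
      Real.cos lam * (1 + w.re) := by
  have hrot : exp (-(lam : ℂ) * I) * exp (lam * I) = 1 := by rw [← exp_add]; simp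
  have hexp_re : (exp (-(lam : ℂ) * I)).re = Real.cos lam := by
    simpa using exp_ofReal_mul_I_re (-lam)
  rw [mul_add, mul_one, ← mul_assoc, ← mul_assoc, hrot, one_mul, add_re, hexp_re, re_ofReal_mul]
  ring

theorem exp_mul_I_mul_cos_ne_zero {lam : ℝ} (hcos : Real.cos lam ≠ 0) :
    exp (lam * I) * Real.cos lam ≠ 0 :=
  mul_ne_zero (exp_ne_zero _) (ofReal_ne_zero.2 hcos)

theorem isLogBranch_mul_exp {M : ℂ → ℂ} (hM : DifferentiableOn ℂ M (ball (0 : ℂ) 1))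
    (hM0 : M 0 = 0) : IsLogBranch (fun z => z * exp (M z)) M :=
  ⟨hM, hM0, fun _ _ hz0 => (mul_div_cancel_left₀ _ hz0).symm⟩

theorem exists_isLogBranch {f : ℂ → ℂ} (hf : DifferentiableOn ℂ f (ball (0 : ℂ) 1))
    (hf0 : f 0 = 0) (hf'0 : deriv f 0 = 1) (hne : ∀ z ∈ ball (0 : ℂ) 1, z ≠ 0 → f z ≠ 0) :
    ∃ L, IsLogBranch f L := by
  have hslope : ∀ z ≠ 0, dslope f 0 z = f z / z := fun z hz0 => by
    rw [dslope_of_ne f hz0, slope_def_field, hf0, sub_zero, sub_zero]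
  -- `f z / z`, extended by `f' 0 = 1` at the origin, is holomorphic and zero-free on the disk.
  obtain ⟨L, hLd, hL0, hexp⟩ := exists_differentiableOn_exp_eq
    ((differentiableOn_dslope (isOpen_ball.mem_nhds (mem_ball_self one_pos))).2 hf)
    (fun z hz => by
      rcases eq_or_ne z 0 with rfl | hz0
      · simp [hf'0]
      · simpa [hslope z hz0] using div_ne_zero (hne z hz hz0) hz0)
  refine ⟨L, hLd, by simp [hL0, hf'0], fun z hz hz0 => ?_⟩
  rw [hexp z hz, hslope z hz0]

namespace IsLogBranch

variable {f L : ℂ → ℂ}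

theorem eqOn {L' : ℂ → ℂ} (hL : IsLogBranch f L) (hL' : IsLogBranch f L') :
    EqOn L L' (ball (0 : ℂ) 1) := by
  refine isOpen_ball.eqOn_of_exp_eqOn (convex_ball 0 1).isPreconnected hL.1 hL'.1
    (fun z hz => ?_) (mem_ball_self one_pos) (hL.2.1.trans hL'.2.1.symm)
  rcases eq_or_ne z 0 with rfl | hz0
  · rw [hL.2.1, hL'.2.1]
  · rw [hL.2.2 z hz hz0, hL'.2.2 z hz hz0]

theorem eqOn_mul_exp (hL : IsLogBranch f L) (hf0 : f 0 = 0) :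
    EqOn f (fun z => z * exp (L z)) (ball (0 : ℂ) 1) := by
  intro z hz
  rcases eq_or_ne z 0 with rfl | hz0
  · simp [hf0]
  · simp only [hL.2.2 z hz hz0, mul_div_cancel₀ _ hz0]

theorem hasDerivAt (hL : IsLogBranch f L) (hf0 : f 0 = 0) {z : ℂ} (hz : z ∈ ball (0 : ℂ) 1) :
    HasDerivAt f (exp (L z) * (1 + z * deriv L z)) z := by
  have hmul : HasDerivAt (fun w => w * exp (L w)) (1 * exp (L z) + z * (exp (L z) * deriv L z)) z :=
    (hasDerivAt_id z).mul (hL.1.differentiableAt (isOpen_ball.mem_nhds hz)).hasDerivAt.cexp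
  refine (hmul.congr_of_eventuallyEq
    (Filter.eventuallyEq_of_mem (isOpen_ball.mem_nhds hz) (hL.eqOn_mul_exp hf0))).congr_deriv ?_
  ring

theorem mem_spiralClass_iff (hL : IsLogBranch f L) (hf0 : f 0 = 0) (lam : ℝ) :
    f ∈ SpiralClass lam ↔ ∀ z ∈ ball (0 : ℂ) 1, z ≠ 0 →
      0 < (exp (-(lam : ℂ) * I) * (1 + z * deriv L z)).re := by
  have hquot : ∀ z ∈ ball (0 : ℂ) 1, z ≠ 0 →
      exp (-(lam : ℂ) * I) * z * deriv f z / f z = exp (-(lam : ℂ) * I) * (1 + z * deriv L z) := by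
    intro z hz hz0
    rw [(hL.hasDerivAt hf0 hz).deriv, hL.eqOn_mul_exp hf0 hz]
    field_simp [exp_ne_zero (L z)]
  refine ⟨fun hf z hz hz0 => hquot z hz hz0 ▸ hf.2.2.2.2 z hz hz0,
    fun h => ⟨fun z hz => (hL.hasDerivAt hf0 hz).differentiableAt.differentiableWithinAt,
      hf0, ?_, fun z hz hz0 => ?_, fun z hz hz0 => hquot z hz hz0 ▸ h z hz hz0⟩⟩
  · simp [(hL.hasDerivAt hf0 (mem_ball_self one_pos)).deriv, hL.2.1]
  · rw [hL.eqOn_mul_exp hf0 hz]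
    exact mul_ne_zero hz0 (exp_ne_zero _)

theorem exists_spiralCorrespond_right (hL : IsLogBranch f L) {lam : ℝ} (hcos : Real.cos lam ≠ 0) :
    ∃ g, g 0 = 0 ∧ SpiralCorrespond lam f g := by
  set Lg := fun z => (exp (lam * I) * Real.cos lam)⁻¹ * L z
  exact ⟨fun z => z * exp (Lg z), zero_mul _, L, Lg, hL,
    isLogBranch_mul_exp (hL.1.const_mul _) (by simp [Lg, hL.2.1]),
    fun z _ => (mul_inv_cancel_left₀ (exp_mul_I_mul_cos_ne_zero hcos) (L z)).symm⟩

theorem exists_spiralCorrespond_left (hL : IsLogBranch g L) (lam : ℝ) :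
    ∃ f, f 0 = 0 ∧ SpiralCorrespond lam f g :=
  ⟨fun z => z * exp (exp (lam * I) * Real.cos lam * L z), zero_mul _, _, L,
    isLogBranch_mul_exp (hL.1.const_mul _) (by simp [hL.2.1]), hL, fun _ _ => rfl⟩

end IsLogBranch

namespace SpiralCorrespond

variable {lam : ℝ} {f g : ℂ → ℂ}

theorem mem_spiralClass_iff (h : SpiralCorrespond lam f g) (hcos : 0 < Real.cos lam)
    (hf0 : f 0 = 0) (hg0 : g 0 = 0) : f ∈ SpiralClass lam ↔ g ∈ SpiralClass 0 := by
  obtain ⟨Lf, Lg, hLf, hLg, hfg⟩ := h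
  rw [hLf.mem_spiralClass_iff hf0, hLg.mem_spiralClass_iff hg0]
  refine forall₂_congr fun z hz => imp_congr_right fun _ => ?_
  have hderiv : deriv Lf z = exp (lam * I) * Real.cos lam * deriv Lg z := by
    rw [(Filter.eventuallyEq_of_mem (isOpen_ball.mem_nhds hz) hfg).deriv_eq,
      deriv_const_mul _ (hLg.1.differentiableAt (isOpen_ball.mem_nhds hz))]
  rw [hderiv, mul_left_comm z, re_exp_neg_mul_I_mul_one_add, mul_pos_iff_of_pos_left hcos]
  simp

theorem right_unique {g' : ℂ → ℂ} (h : SpiralCorrespond lam f g) (h' : SpiralCorrespond lam f g')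
    (hcos : Real.cos lam ≠ 0) (hg0 : g 0 = 0) (hg'0 : g' 0 = 0) :
    EqOn g g' (ball (0 : ℂ) 1) := by
  obtain ⟨Lf, Lg, hLf, hLg, hfg⟩ := h
  obtain ⟨Lf', Lg', hLf', hLg', hfg'⟩ := h'
  have hL : EqOn Lg Lg' (ball (0 : ℂ) 1) := fun z hz =>
    mul_left_cancel₀ (exp_mul_I_mul_cos_ne_zero hcos)
      ((hfg z hz).symm.trans ((hLf.eqOn hLf' hz).trans (hfg' z hz)))
  intro z hz
  simp only [hLg.eqOn_mul_exp hg0 hz, hLg'.eqOn_mul_exp hg'0 hz, hL hz]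

theorem left_unique {f' : ℂ → ℂ} (h : SpiralCorrespond lam f g) (h' : SpiralCorrespond lam f' g)
    (hf0 : f 0 = 0) (hf'0 : f' 0 = 0) : EqOn f f' (ball (0 : ℂ) 1) := by
  obtain ⟨Lf, Lg, hLf, hLg, hfg⟩ := h
  obtain ⟨Lf', Lg', hLf', hLg', hfg'⟩ := h'
  intro z hz
  simp only [hLf.eqOn_mul_exp hf0 hz, hLf'.eqOn_mul_exp hf'0 hz, hfg z hz, hfg' z hz,
    hLg.eqOn hLg' hz]

end SpiralCorrespond

/-- every `f ∈ F_λ` corresponds to a unique starlike `g ∈ S*` (unique as a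
function on the disk), and the correspondence `f ↦ g` is a bijection from `F_λ` onto
`S*`. -/
theorem spirallike_starlike_correspondence (lam : ℝ)
    (hlam : lam ∈ Set.Ioo (-(Real.pi / 2)) (Real.pi / 2)) :
    (∀ f ∈ SpiralClass lam, ∃ g ∈ SpiralClass 0, SpiralCorrespond lam f g) ∧
    (∀ f ∈ SpiralClass lam, ∀ g₁ ∈ SpiralClass 0, ∀ g₂ ∈ SpiralClass 0,
      SpiralCorrespond lam f g₁ → SpiralCorrespond lam f g₂ →
        Set.EqOn g₁ g₂ (ball (0 : ℂ) 1)) ∧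
    (∀ g ∈ SpiralClass 0, ∃ f ∈ SpiralClass lam, SpiralCorrespond lam f g) ∧
    (∀ f₁ ∈ SpiralClass lam, ∀ f₂ ∈ SpiralClass lam, ∀ g ∈ SpiralClass 0,
      SpiralCorrespond lam f₁ g → SpiralCorrespond lam f₂ g →
        Set.EqOn f₁ f₂ (ball (0 : ℂ) 1)) := by
  have hcos : 0 < Real.cos lam := Real.cos_pos_of_mem_Ioo hlam
  refine ⟨fun f hf => ?_,
    fun _ _ g₁ hg₁ g₂ hg₂ h₁ h₂ => h₁.right_unique h₂ hcos.ne' hg₁.2.1 hg₂.2.1,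
    fun g hg => ?_,
    fun f₁ hf₁ f₂ hf₂ _ _ h₁ h₂ => h₁.left_unique h₂ hf₁.2.1 hf₂.2.1⟩
  · obtain ⟨L, hL⟩ := exists_isLogBranch hf.1 hf.2.1 hf.2.2.1 hf.2.2.2.1
    obtain ⟨g, hg0, hfg⟩ := hL.exists_spiralCorrespond_right hcos.ne'
    exact ⟨g, (hfg.mem_spiralClass_iff hcos hf.2.1 hg0).1 hf, hfg⟩
  · obtain ⟨L, hL⟩ := exists_isLogBranch hg.1 hg.2.1 hg.2.2.1 hg.2.2.2.1
    obtain ⟨f, hf0, hfg⟩ := hL.exists_spiralCorrespond_left lam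
    exact ⟨f, (hfg.mem_spiralClass_iff hcos hf0 hg.2.1).2 hg, hfg⟩
end

section
/- Let λ ∈ (−π/2, π/2) and let β : ℝ → ℝ be a non-decreasing function with β(t + 2π) = β(t) + 2π for all t ∈ ℝ. Define f(z) = z·exp( −(e^{iλ} cos λ / π) ∫_{[0,2π)} Log(1 − e^{−it} z) dμ_β(t) ) for z ∈ 𝔻, where μ_β is the Lebesgue–Stieltjes measure associated with β and Log is the principal branch of the logarithm (well defined since |e^{−it}z| < 1). Then f ∈ F_λ, i.e. f is a λ-spirallike function. -/
open Set Metric MeasureTheory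

/-!
Let `ν` be `μ_β` restricted to `[0, 2π)`; periodicity of `β` gives `ν` total mass `2π`.
Differentiating under the integral sign, with `w_t = e^{-it} z`,
`e^{-iλ} z f'(z) / f(z) = e^{-iλ} + (cos λ / π) ∫ w_t / (1 - w_t) dν(t)`.
On the unit disk `Re (w / (1 - w)) > -1/2` (the Herglotz kernel `(1 + w) / (1 - w)` has positive
real part), so the real part is `> cos λ - (cos λ / π) · π = 0`.
-/

open Filter Topology Function

theorem Monotone.leftLim_add_of_apply_add {f : ℝ → ℝ} (hf : Monotone f) {c : ℝ}
    (hfc : ∀ t, f (t + c) = f t + c) (x : ℝ) :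
    leftLim f (x + c) = leftLim f x + c := by
  apply leftLim_eq_of_tendsto
  have hshift : Tendsto (· - c) (𝓝[<] (x + c)) (𝓝[<] x) := by
    refine tendsto_nhdsWithin_of_tendsto_nhds_of_eventually_within _ ?_ ?_
    · simpa using ((continuous_sub_right c).tendsto (x + c)).mono_left nhdsWithin_le_nhds
    · filter_upwards [self_mem_nhdsWithin] with y (hy : y < x + c)
      exact sub_lt_iff_lt_add.2 hy
  refine (((hf.tendsto_leftLim x).comp hshift).add_const c).congr fun y => ?_
  simp [← hfc]

theorem Monotone.stieltjesFunction_measure_Ico_add {f : ℝ → ℝ} (hf : Monotone f) {c : ℝ}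
    (hfc : ∀ t, f (t + c) = f t + c) (a : ℝ) :
    hf.stieltjesFunction.measure (Ico a (a + c)) = ENNReal.ofReal c := by
  have hleftLim (x : ℝ) : leftLim hf.stieltjesFunction x = leftLim f x :=
    leftLim_rightLim (hf.tendsto_leftLim x)
  rw [StieltjesFunction.measure_Ico, hleftLim, hleftLim, hf.leftLim_add_of_apply_add hfc,
    add_sub_cancel_left]

theorem MeasureTheory.integral_pos_of_forall_pos {α : Type*} [MeasurableSpace α] {μ : Measure α}
    [NeZero μ] {f : α → ℝ} (hfi : Integrable f μ) (hf : ∀ x, 0 < f x) : 0 < ∫ x, f x ∂μ := by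
  rw [integral_pos_iff_support_of_nonneg (fun x => (hf x).le) hfi,
    support_eq_univ fun x => (hf x).ne']
  exact (Measure.measure_univ_pos).2 (NeZero.ne μ)

namespace Complex

theorem one_sub_mem_slitPlane {w : ℂ} (hw : ‖w‖ < 1) : 1 - w ∈ slitPlane := by
  simpa [sub_eq_add_neg] using mem_slitPlane_of_norm_lt_one (by rwa [norm_neg] : ‖-w‖ < 1)

theorem norm_log_one_sub_le {w : ℂ} {r : ℝ} (hr : r < 1) (hw : ‖w‖ ≤ r) :
    ‖log (1 - w)‖ ≤ r ^ 2 * (1 - r)⁻¹ / 2 + r := by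
  have hw' : ‖-w‖ < 1 := by rw [norm_neg]; linarith
  calc ‖log (1 - w)‖ = ‖log (1 + -w)‖ := by rw [sub_eq_add_neg]
    _ ≤ ‖-w‖ ^ 2 * (1 - ‖-w‖)⁻¹ / 2 + ‖-w‖ := norm_log_one_add_le hw'
    _ ≤ r ^ 2 * (1 - r)⁻¹ / 2 + r := by
      rw [norm_neg]
      gcongr
      exact inv_nonneg.2 (by linarith)

theorem norm_div_one_sub_le (a : ℂ) {w : ℂ} {r : ℝ} (hr : r < 1) (hw : ‖w‖ ≤ r) :
    ‖a / (1 - w)‖ ≤ ‖a‖ / (1 - r) := by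
  rw [norm_div]
  gcongr
  calc 1 - r ≤ ‖(1 : ℂ)‖ - ‖w‖ := by rw [norm_one]; linarith
  _ ≤ ‖1 - w‖ := norm_sub_norm_le _ _

theorem neg_half_lt_re_div_one_sub {w : ℂ} (hw : ‖w‖ < 1) : -(1 / 2) < (w / (1 - w)).re := by
  have hne : 1 - w ≠ 0 := slitPlane_ne_zero (one_sub_mem_slitPlane hw)
  have hsq : w.re * w.re + w.im * w.im < 1 := by
    rw [← normSq_apply, ← Complex.sq_norm]
    nlinarith [norm_nonneg w]
  rw [div_re, ← add_div, lt_div_iff₀ (normSq_pos.2 hne), normSq_apply]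
  simp only [sub_re, sub_im, one_re, one_im]
  nlinarith

end Complex

open Complex

section LogIntegral

variable {α : Type*} [MeasurableSpace α] {μ : Measure α} [IsFiniteMeasure μ] {u : α → ℂ}

theorem hasDerivAt_integral_log_one_sub_mul (hu : Measurable u) (hu1 : ∀ t, ‖u t‖ ≤ 1)
    {z₀ : ℂ} (hz₀ : ‖z₀‖ < 1) :
    HasDerivAt (fun z => ∫ t, log (1 - u t * z) ∂μ) (∫ t, -u t / (1 - u t * z₀) ∂μ) z₀ := by
  obtain ⟨r, hz₀r, hr1⟩ := exists_between hz₀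
  have hnorm_le : ∀ z ∈ ball z₀ (r - ‖z₀‖), ∀ t, ‖u t * z‖ ≤ r := fun z hz t => by
    have hz' : ‖z - z₀‖ < r - ‖z₀‖ := mem_ball_iff_norm.1 hz
    calc ‖u t * z‖ ≤ ‖z‖ := by rw [norm_mul]; exact mul_le_of_le_one_left (norm_nonneg z) (hu1 t)
      _ ≤ ‖z₀‖ + ‖z - z₀‖ := norm_le_norm_add_norm_sub' z z₀
      _ ≤ r := by linarith
  have hz₀_mem : z₀ ∈ ball z₀ (r - ‖z₀‖) := mem_ball_self (sub_pos.2 hz₀r)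
  have hmeas (z : ℂ) : AEStronglyMeasurable (fun t => log (1 - u t * z)) μ :=
    (measurable_const.sub (hu.mul_const z)).clog.aestronglyMeasurable
  refine (hasDerivAt_integral_of_dominated_loc_of_deriv_le (μ := μ)
    (F := fun z t => log (1 - u t * z)) (F' := fun z t => -u t / (1 - u t * z))
    (bound := fun _ => (1 - r)⁻¹) (ball_mem_nhds z₀ (sub_pos.2 hz₀r))
    (Eventually.of_forall hmeas)
    (.of_bound (hmeas z₀) (r ^ 2 * (1 - r)⁻¹ / 2 + r) (ae_of_all _ fun t =>
      norm_log_one_sub_le hr1 (hnorm_le z₀ hz₀_mem t)))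
    (hu.neg.div (measurable_const.sub (hu.mul_const z₀))).aestronglyMeasurable
    (ae_of_all _ fun t z hz => ?_) (integrable_const _) (ae_of_all _ fun t z hz => ?_)).2
  · calc ‖-u t / (1 - u t * z)‖ ≤ ‖-u t‖ / (1 - r) := norm_div_one_sub_le _ hr1 (hnorm_le z hz t)
      _ ≤ 1 / (1 - r) := div_le_div_of_nonneg_right (by rw [norm_neg]; exact hu1 t) (by linarith)
      _ = (1 - r)⁻¹ := one_div _
  · have hslit := one_sub_mem_slitPlane ((hnorm_le z hz t).trans_lt hr1)
    simpa using (((hasDerivAt_id z).const_mul (u t)).const_sub 1).clog hslit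

theorem hasDerivAt_mul_exp_mul_integral_log_one_sub_mul (c : ℂ) (hu : Measurable u)
    (hu1 : ∀ t, ‖u t‖ ≤ 1) {z : ℂ} (hz : ‖z‖ < 1) :
    HasDerivAt (fun z => z * exp (-c * ∫ t, log (1 - u t * z) ∂μ))
      (exp (-c * ∫ t, log (1 - u t * z) ∂μ) * (1 + c * ∫ t, u t * z / (1 - u t * z) ∂μ)) z := by
  have hz_mul : z * ∫ t, -u t / (1 - u t * z) ∂μ = -∫ t, u t * z / (1 - u t * z) ∂μ := by
    rw [← integral_const_mul, ← integral_neg]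
    congr 1 with t
    ring
  refine ((hasDerivAt_id' z).mul ((hasDerivAt_integral_log_one_sub_mul hu hu1
    hz).const_mul (-c)).cexp).congr_deriv ?_
  linear_combination -(exp (-c * ∫ t, log (1 - u t * z) ∂μ) * c) * hz_mul

theorem integrable_div_one_sub {w : α → ℂ} (hw : Measurable w) {r : ℝ} (hr : r < 1)
    (hwr : ∀ t, ‖w t‖ ≤ r) : Integrable (fun t => w t / (1 - w t)) μ :=
  .of_bound (hw.div (measurable_const.sub hw)).aestronglyMeasurable (r / (1 - r))
    (ae_of_all _ fun t => (norm_div_one_sub_le _ hr (hwr t)).trans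
      (div_le_div_of_nonneg_right (hwr t) (by linarith)))

theorem neg_half_mul_measureReal_lt_re_integral_div_one_sub [NeZero μ] {w : α → ℂ}
    (hint : Integrable (fun t => w t / (1 - w t)) μ) (hw : ∀ t, ‖w t‖ < 1) :
    -(1 / 2) * μ.real univ < (∫ t, w t / (1 - w t) ∂μ).re := by
  have hre : Integrable (fun t => (w t / (1 - w t)).re) μ := hint.re
  have hpos : 0 < ∫ t, ((w t / (1 - w t)).re + 1 / 2) ∂μ :=
    integral_pos_of_forall_pos (hre.add (integrable_const _)) fun t => by
      linarith [neg_half_lt_re_div_one_sub (hw t)]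
  rw [integral_add hre (integrable_const _), integral_const, smul_eq_mul] at hpos
  have hre_comm := integral_re hint
  simp only [RCLike.re_to_complex] at hre_comm
  rw [← hre_comm]
  linarith

end LogIntegral

theorem mem_spiralClass_of_integral_log {α : Type*} [MeasurableSpace α] {lam : ℝ}
    (hcos : 0 < Real.cos lam) (ν : Measure α) [IsFiniteMeasure ν]
    (hν : ν.real univ = 2 * Real.pi) {u : α → ℂ} (hu : Measurable u) (hu1 : ∀ t, ‖u t‖ ≤ 1) :
    (fun z : ℂ => z * exp (-(exp (lam * I) * (Real.cos lam : ℂ) / (Real.pi : ℂ)) *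
      ∫ t, log (1 - u t * z) ∂ν)) ∈ SpiralClass lam := by
  set c : ℂ := exp (lam * I) * (Real.cos lam : ℂ) / (Real.pi : ℂ)
  set f : ℂ → ℂ := fun z => z * exp (-c * ∫ t, log (1 - u t * z) ∂ν)
  have hf' (z : ℂ) (hz : ‖z‖ < 1) : HasDerivAt f
      (exp (-c * ∫ t, log (1 - u t * z) ∂ν) * (1 + c * ∫ t, u t * z / (1 - u t * z) ∂ν)) z :=
    hasDerivAt_mul_exp_mul_integral_log_one_sub_mul c hu hu1 hz
  refine ⟨fun z hz => (hf' z (mem_ball_zero_iff.1 hz)).differentiableAt.differentiableWithinAt,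
    by simp [f], ?_, fun z _ hz => mul_ne_zero hz (exp_ne_zero _), fun z hz_ball hz0 => ?_⟩
  · rw [(hf' 0 (by simp)).deriv]
    simp
  have hz : ‖z‖ < 1 := mem_ball_zero_iff.1 hz_ball
  have hw (t : α) : ‖u t * z‖ ≤ ‖z‖ := by
    rw [norm_mul]; exact mul_le_of_le_one_left (norm_nonneg z) (hu1 t)
  have hexp_mul_c : exp (-lam * I) * c = ((Real.cos lam / Real.pi : ℝ) : ℂ) := by
    calc exp (-lam * I) * c = exp (-lam * I + lam * I) * Real.cos lam / Real.pi := by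
          rw [exp_add]; ring
      _ = _ := by simp
  have hlogDeriv : exp (-lam * I) * z * deriv f z / f z
      = exp (-lam * I) + ((Real.cos lam / Real.pi : ℝ) : ℂ) * ∫ t, u t * z / (1 - u t * z) ∂ν := by
    rw [(hf' z hz).deriv, ← hexp_mul_c]
    simp only [f]
    field_simp
  have hexp_re : (exp (-lam * I)).re = Real.cos lam := by
    rw [← ofReal_neg, exp_ofReal_mul_I_re, Real.cos_neg]
  have : NeZero ν := ⟨by rintro rfl; simp [Real.pi_ne_zero] at hν⟩
  have hJ := neg_half_mul_measureReal_lt_re_integral_div_one_sub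
    (integrable_div_one_sub (μ := ν) (hu.mul_const z) hz hw) fun t => (hw t).trans_lt hz
  rw [hν] at hJ
  rw [hlogDeriv, add_re, re_ofReal_mul, hexp_re]
  calc 0 = Real.cos lam + Real.cos lam / Real.pi * (-(1 / 2) * (2 * Real.pi)) := by
        field_simp; ring
    _ < _ := by gcongr

/-- if `β : ℝ → ℝ` is non-decreasing with `β(t+2π) = β(t) + 2π`, then
`f(z) = z·exp(−(e^{iλ} cos λ / π) ∫_{[0,2π)} Log(1 − e^{−it} z) dμ_β(t))` is
`λ`-spirallike, where `μ_β` is the Lebesgue–Stieltjes measure of (the right-continuous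
modification of) `β`. -/
theorem representation_gives_spirallike (lam : ℝ)
    (hlam : lam ∈ Set.Ioo (-(Real.pi / 2)) (Real.pi / 2))
    (β : ℝ → ℝ) (hmono : Monotone β)
    (hper : ∀ t : ℝ, β (t + 2 * Real.pi) = β t + 2 * Real.pi) :
    (fun z : ℂ => z * Complex.exp
        (-(Complex.exp ((lam : ℂ) * Complex.I) * (Real.cos lam : ℂ) / (Real.pi : ℂ)) *
          ∫ t in Set.Ico (0 : ℝ) (2 * Real.pi),
            Complex.log (1 - Complex.exp (-(t : ℂ) * Complex.I) * z)
              ∂hmono.stieltjesFunction.measure))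
      ∈ SpiralClass lam := by
  have hmass : hmono.stieltjesFunction.measure (Ico 0 (2 * Real.pi))
      = ENNReal.ofReal (2 * Real.pi) := by
    simpa using hmono.stieltjesFunction_measure_Ico_add hper 0
  have : IsFiniteMeasure (hmono.stieltjesFunction.measure.restrict (Ico 0 (2 * Real.pi))) :=
    isFiniteMeasure_restrict.2 (hmass ▸ ENNReal.ofReal_ne_top)
  refine mem_spiralClass_of_integral_log (Real.cos_pos_of_mem_Ioo hlam) _ ?_ (by fun_prop)
    fun t => by simp [norm_exp]
  rw [measureReal_def, Measure.restrict_apply_univ, hmass, ENNReal.toReal_ofReal Real.two_pi_pos.le]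
end

section
/- Let λ ∈ (−π/2, π/2) and f ∈ F_λ. Then for every t ∈ ℝ the radial limit U(t) = lim_{r→1−} u_f(r e^{it}) exists (as a finite real number), the function β(t) = U(t) + t is non-decreasing in t, and β(t + 2π) = β(t) + 2π for all t ∈ ℝ. -/
open Set Metric Filter Topology

/-- The canonical harmonic branch `u_f = Im L_f − (tan λ)·Re L_f` of the
`λ`-argument of `f(z)/z`. -/
noncomputable def lambdaArgBranch (lam : ℝ) (L : ℂ → ℂ) (z : ℂ) : ℝ :=
  (L z).im - Real.tan lam * (L z).re

/-!
Write `u = lambdaArgBranch λ L = Im((1 - i tan λ) L)`. It is harmonic, and the spirallike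
condition makes `t ↦ u(r e^{it}) + t` non-decreasing on every circle: its derivative is
`Re(e^{-iλ} z f'(z)/f(z)) / cos λ`. With the mean value property this bounds `u - u(0)` by `2π`,
so Helly's selection theorem gives radii `r_k → 1` along which `u(r_k e^{is}) + s` converges,
off a countable set, to a non-decreasing `ψ`; by dominated convergence `u` is the Poisson
integral of `ψ(s) - s`. The Poisson kernel being an approximate identity, the radial limit at
`e^{it}` is the mean of the one-sided limits of `ψ` at `t`, minus `t`, and that mean is monotone
in `t`.
-/

open MeasureTheory Real intervalIntegral InnerProductSpace

lemma intervalIntegral.integral_neg_eq_integral_zero_add_comp_neg {f : ℝ → ℝ} {a : ℝ}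
    (hf : IntervalIntegrable f volume (-a) a) :
    ∫ x in -a..a, f x = ∫ x in 0..a, (f x + f (-x)) := by
  have hzero : 0 ∈ uIcc (-a) a := by
    rcases le_total 0 a with h | h <;> simp [uIcc, h]
  have hleft : IntervalIntegrable f volume (-a) 0 := hf.mono_set (uIcc_subset_uIcc_left hzero)
  have hright : IntervalIntegrable f volume 0 a := hf.mono_set (uIcc_subset_uIcc_right hzero)
  have hneg : IntervalIntegrable (fun x => f (-x)) volume 0 a := by
    simpa using (IntervalIntegrable.iff_comp_neg (by simp)).mp hleft.symm
  rw [← integral_add_adjacent_intervals hleft hright, integral_add hright hneg,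
    integral_comp_neg, neg_zero, add_comm]

lemma Function.Periodic.abs_sub_average_le_of_monotone_add_id {g : ℝ → ℝ} {T : ℝ} (hT : 0 < T)
    (hg : Function.Periodic g T) (hmono : Monotone fun s => g s + s) (t : ℝ) :
    |g t - T⁻¹ * ∫ s in 0..T, g s| ≤ T := by
  have hint : IntervalIntegrable g volume t (t + T) := by
    simpa using hmono.intervalIntegrable.sub (continuous_id.intervalIntegrable t (t + T))
  have hupper : ∀ s ∈ Icc t (t + T), g s ≤ g t + T := fun s hs => by
    have := hmono hs.2
    simp only [hg t] at this
    linarith [hs.1]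
  have hlower : ∀ s ∈ Icc t (t + T), g t - T ≤ g s := fun s hs => by
    linarith [hmono hs.1, hs.2]
  have hperiod : ∫ s in t..t + T, g s = ∫ s in 0..T, g s := by
    simpa using hg.intervalIntegral_add_eq t 0
  have h1 := integral_mono_on (by linarith) hint intervalIntegrable_const hupper
  have h2 := integral_mono_on (by linarith) intervalIntegrable_const hint hlower
  simp only [intervalIntegral.integral_const, add_sub_cancel_left, smul_eq_mul, hperiod] at h1 h2
  rw [abs_le]
  constructor
  · rw [le_sub_iff_add_le, ← le_sub_iff_add_le', inv_mul_le_iff₀ hT]; nlinarith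
  · rw [sub_le_iff_le_add, ← sub_le_iff_le_add', le_inv_mul_iff₀ hT]; nlinarith

/-- Helly's selection theorem. -/
theorem exists_subseq_tendsto_of_monotone {f : ℕ → ℝ → ℝ} (hmono : ∀ n, Monotone (f n))
    (hbdd : ∀ t, ∃ C, ∀ n, |f n t| ≤ C) :
    ∃ (φ : ℕ → ℕ) (ψ : ℝ → ℝ), StrictMono φ ∧ Monotone ψ ∧
      ∀ t, ContinuousAt ψ t → Tendsto (fun n => f (φ n) t) atTop (𝓝 (ψ t)) := by
  choose C hC using hbdd
  have hK : IsCompact (univ.pi fun q : ℚ => Icc (-C q) (C q)) :=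
    isCompact_univ_pi fun _ => isCompact_Icc
  obtain ⟨y, -, φ, hφ, hy⟩ := hK.tendsto_subseq (x := fun n (q : ℚ) => f n q)
    fun n => mem_univ_pi.2 fun q => abs_le.1 (hC q n)
  have hyq : ∀ q : ℚ, Tendsto (fun n => f (φ n) q) atTop (𝓝 (y q)) :=
    fun q => tendsto_pi_nhds.1 hy q
  have hymono : ∀ p q : ℚ, (p : ℝ) ≤ q → y p ≤ y q := fun p q hpq =>
    le_of_tendsto_of_tendsto' (hyq p) (hyq q) fun n => hmono _ hpq
  set ψ : ℝ → ℝ := fun t => sInf (y '' {q | t < q})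
  have hne : ∀ t : ℝ, (y '' {q : ℚ | t < q}).Nonempty := fun t => by
    obtain ⟨q, hq⟩ := exists_rat_gt t
    exact ⟨_, mem_image_of_mem _ hq⟩
  have hbddBelow : ∀ t : ℝ, BddBelow (y '' {q : ℚ | t < q}) := fun t => by
    obtain ⟨p, hp⟩ := exists_rat_lt t
    exact ⟨y p, by rintro _ ⟨q, hq, rfl⟩; exact hymono p q (hp.trans hq).le⟩
  have hψ_le : ∀ (t : ℝ) (q : ℚ), t < q → ψ t ≤ y q := fun t q hq =>
    csInf_le (hbddBelow t) (mem_image_of_mem _ hq)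
  have hψmono : Monotone ψ := fun s t hst =>
    csInf_le_csInf (hbddBelow s) (hne t) (image_mono fun q hq => hst.trans_lt hq)
  refine ⟨φ, ψ, hφ, hψmono, fun t ht => tendsto_order.2 ⟨fun b hb => ?_, fun b hb => ?_⟩⟩
  · obtain ⟨s, hst, hbs⟩ : ∃ s < t, b < ψ s := (ht.eventually (lt_mem_nhds hb)).exists_lt
    obtain ⟨p, hsp, hpt⟩ := exists_rat_btwn hst
    filter_upwards [(hyq p).eventually (lt_mem_nhds (hbs.trans_le (hψ_le s p hsp)))] with n hn
    exact hn.trans_le (hmono _ hpt.le)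
  · obtain ⟨_, ⟨q, hq, rfl⟩, hqb⟩ := exists_lt_of_csInf_lt (hne t) hb
    filter_upwards [(hyq q).eventually (gt_mem_nhds hqb)] with n hn
    exact (hmono _ hq.le).trans_lt hn

lemma Monotone.tendsto_comp_add_add_comp_sub {ψ : ℝ → ℝ} (hψ : Monotone ψ) (t : ℝ) :
    Tendsto (fun σ => ψ (t + σ) + ψ (t - σ)) (𝓝[>] 0)
      (𝓝 (Function.rightLim ψ t + Function.leftLim ψ t)) := by
  have hright : Tendsto (fun σ => t + σ) (𝓝[>] 0) (𝓝[>] t) := by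
    simpa using (continuous_const_add t).continuousWithinAt.tendsto_nhdsWithin
      (x := 0) (s := Ioi 0) (t := Ioi t) fun σ (hσ : 0 < σ) => by simp [hσ]
  have hleft : Tendsto (fun σ => t - σ) (𝓝[>] 0) (𝓝[<] t) := by
    simpa using (continuous_sub_left t).continuousWithinAt.tendsto_nhdsWithin
      (x := 0) (s := Ioi 0) (t := Iio t) fun σ (hσ : 0 < σ) => by simp [hσ]
  exact ((hψ.tendsto_rightLim t).comp hright).add ((hψ.tendsto_leftLim t).comp hleft)

noncomputable def polarPoissonKernel (ρ σ : ℝ) : ℝ :=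
  (1 - ρ ^ 2) / (1 - 2 * ρ * cos σ + ρ ^ 2)

section PolarPoissonKernel

variable {ρ : ℝ}

lemma sq_one_sub_le_polarPoissonKernel_denom (hρ : 0 ≤ ρ) (σ : ℝ) :
    (1 - ρ) ^ 2 ≤ 1 - 2 * ρ * cos σ + ρ ^ 2 := by
  nlinarith [cos_le_one σ]

lemma polarPoissonKernel_denom_pos (hρ0 : 0 ≤ ρ) (hρ1 : ρ < 1) (σ : ℝ) :
    0 < 1 - 2 * ρ * cos σ + ρ ^ 2 :=
  (pow_pos (sub_pos.2 hρ1) 2).trans_le (sq_one_sub_le_polarPoissonKernel_denom hρ0 σ)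

lemma polarPoissonKernel_nonneg (hρ0 : 0 ≤ ρ) (hρ1 : ρ < 1) (σ : ℝ) :
    0 ≤ polarPoissonKernel ρ σ :=
  div_nonneg (by nlinarith) (polarPoissonKernel_denom_pos hρ0 hρ1 σ).le

lemma polarPoissonKernel_le (hρ0 : 0 ≤ ρ) (hρ1 : ρ < 1) (σ : ℝ) :
    polarPoissonKernel ρ σ ≤ (1 + ρ) / (1 - ρ) := by
  have h1 : 0 < 1 - ρ := sub_pos.2 hρ1
  calc polarPoissonKernel ρ σ ≤ (1 - ρ ^ 2) / (1 - ρ) ^ 2 :=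
        div_le_div_of_nonneg_left (by nlinarith) (by positivity)
          (sq_one_sub_le_polarPoissonKernel_denom hρ0 σ)
    _ = (1 + ρ) / (1 - ρ) := by field_simp; ring

@[simp]
lemma polarPoissonKernel_neg (ρ σ : ℝ) :
    polarPoissonKernel ρ (-σ) = polarPoissonKernel ρ σ := by
  simp [polarPoissonKernel]

lemma polarPoissonKernel_le_of_le (hρ0 : 0 ≤ ρ) (hρ1 : ρ < 1) {δ σ : ℝ} (hδ : 0 ≤ δ)
    (hδσ : δ ≤ σ) (hσ : σ ≤ π) : polarPoissonKernel ρ σ ≤ polarPoissonKernel ρ δ := by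
  have hcos : cos σ ≤ cos δ := cos_le_cos_of_nonneg_of_le_pi hδ hσ hδσ
  exact div_le_div_of_nonneg_left (by nlinarith) (polarPoissonKernel_denom_pos hρ0 hρ1 δ)
    (by nlinarith)

lemma continuous_polarPoissonKernel (hρ0 : 0 ≤ ρ) (hρ1 : ρ < 1) :
    Continuous (polarPoissonKernel ρ) :=
  continuous_const.div (by fun_prop) fun σ => (polarPoissonKernel_denom_pos hρ0 hρ1 σ).ne'

lemma continuousAt_polarPoissonKernel_left (hρ0 : 0 ≤ ρ) (hρ1 : ρ < 1) (σ : ℝ) :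
    ContinuousAt (fun ρ => polarPoissonKernel ρ σ) ρ :=
  ContinuousAt.div (by fun_prop) (by fun_prop) (polarPoissonKernel_denom_pos hρ0 hρ1 σ).ne'

lemma tendsto_polarPoissonKernel_one {δ : ℝ} (hδ : cos δ < 1) :
    Tendsto (fun ρ => polarPoissonKernel ρ δ) (𝓝 1) (𝓝 0) := by
  have h : ContinuousAt (fun ρ => polarPoissonKernel ρ δ) 1 :=
    ContinuousAt.div (by fun_prop) (by fun_prop) (by nlinarith)
  simpa [polarPoissonKernel] using h.tendsto

end PolarPoissonKernel

lemma poissonKernel_circleMap {r : ℝ} (hr : 0 < r) (ρ t σ : ℝ) :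
    poissonKernel 0 (circleMap 0 ρ t) (circleMap 0 r (t + σ))
      = polarPoissonKernel (ρ / r) σ := by
  have hrotate : circleMap 0 r (t + σ) - circleMap 0 ρ t
      = Complex.exp (t * Complex.I) * (circleMap 0 r σ - ρ) := by
    simp only [circleMap, zero_add, Complex.ofReal_add, add_mul, Complex.exp_add]
    ring
  have hnorm : ‖circleMap 0 r (t + σ) - circleMap 0 ρ t‖ ^ 2
      = r ^ 2 - 2 * r * ρ * cos σ + ρ ^ 2 := by
    rw [hrotate, norm_mul, Complex.norm_exp_ofReal_mul_I, one_mul, ← Complex.normSq_eq_norm_sq,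
      Complex.normSq_apply]
    simp only [circleMap, zero_add, Complex.sub_re, Complex.mul_re, Complex.ofReal_re,
      Complex.exp_ofReal_mul_I_re, Complex.ofReal_im, Complex.exp_ofReal_mul_I_im, zero_mul,
      sub_zero, Complex.sub_im, Complex.mul_im, add_zero]
    nlinarith [sin_sq_add_cos_sq σ]
  rw [poissonKernel_def, sub_zero, sub_zero, hnorm, norm_circleMap_zero, norm_circleMap_zero,
    polarPoissonKernel, sq_abs, sq_abs]
  field_simp

lemma InnerProductSpace.HarmonicOnNhd.integral_polarPoissonKernel_mul {v : ℂ → ℝ} {r ρ : ℝ}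
    (hv : HarmonicOnNhd v (closedBall 0 r)) (hρ : 0 ≤ ρ) (hρr : ρ < r) (t : ℝ) :
    ∫ σ in -π..π, polarPoissonKernel (ρ / r) σ * v (circleMap 0 r (t + σ))
      = 2 * π * v (circleMap 0 ρ t) := by
  have hw : circleMap 0 ρ t ∈ ball 0 r := by
    rwa [mem_ball_zero_iff, norm_circleMap_zero, abs_of_nonneg hρ]
  set F : ℝ → ℝ := fun θ =>
    poissonKernel 0 (circleMap 0 ρ t) (circleMap 0 r θ) * v (circleMap 0 r θ)
  have hF : Function.Periodic F (2 * π) := fun θ => by simp only [F, periodic_circleMap 0 r θ]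
  calc ∫ σ in -π..π, polarPoissonKernel (ρ / r) σ * v (circleMap 0 r (t + σ))
      = ∫ σ in -π..π, F (t + σ) := by
        simp only [F, poissonKernel_circleMap (hρ.trans_lt hρr)]
    _ = ∫ θ in (t - π)..(t - π) + 2 * π, F θ := by
      rw [integral_comp_add_left]
      ring_nf
    _ = ∫ θ in 0..2 * π, F θ := by rw [hF.intervalIntegral_add_eq, zero_add]
    _ = 2 * π * v (circleMap 0 ρ t) := by
      rw [← hv.circleAverage_poissonKernel_smul hw, circleAverage_def, smul_eq_mul, ← mul_assoc,
        mul_inv_cancel₀ two_pi_pos.ne', one_mul]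
      rfl

lemma integral_polarPoissonKernel {ρ : ℝ} (hρ0 : 0 ≤ ρ) (hρ1 : ρ < 1) :
    ∫ σ in 0..π, polarPoissonKernel ρ σ = π := by
  have h := HarmonicOnNhd.integral_polarPoissonKernel_mul
    (harmonicOnNhd_const (1 : ℝ) (s := closedBall (0 : ℂ) 1)) hρ0 hρ1 0
  simp only [div_one, mul_one] at h
  rw [integral_neg_eq_integral_zero_add_comp_neg
    ((continuous_polarPoissonKernel hρ0 hρ1).intervalIntegrable _ _)] at h
  simp only [polarPoissonKernel_neg, ← two_mul, intervalIntegral.integral_const_mul] at h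
  linarith

lemma abs_integral_polarPoissonKernel_mul_le {ρ δ ε : ℝ} {g : ℝ → ℝ} (hρ0 : 0 ≤ ρ)
    (hρ1 : ρ < 1) (hδ : 0 ≤ δ) (hε : 0 ≤ ε) (hg : IntervalIntegrable g volume 0 π)
    (hsmall : ∀ σ ∈ Ioc 0 δ, |g σ| ≤ ε) :
    |∫ σ in 0..π, polarPoissonKernel ρ σ * g σ|
      ≤ ε * π + polarPoissonKernel ρ δ * ∫ σ in 0..π, |g σ| := by
  have hP := continuous_polarPoissonKernel hρ0 hρ1
  have hPnn := polarPoissonKernel_nonneg hρ0 hρ1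
  have hPε : IntervalIntegrable (fun σ => ε * polarPoissonKernel ρ σ) volume 0 π :=
    (hP.intervalIntegrable _ _).const_mul ε
  have hpointwise : ∀ σ ∈ Ioo 0 π, |polarPoissonKernel ρ σ * g σ|
      ≤ ε * polarPoissonKernel ρ σ + polarPoissonKernel ρ δ * |g σ| := by
    rintro σ ⟨hσ0, hσπ⟩
    rw [abs_mul, abs_of_nonneg (hPnn σ)]
    rcases le_or_gt σ δ with hσδ | hδσ
    · nlinarith [hsmall σ ⟨hσ0, hσδ⟩, hPnn σ, hPnn δ, abs_nonneg (g σ)]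
    · nlinarith [polarPoissonKernel_le_of_le hρ0 hρ1 hδ hδσ.le hσπ.le, hPnn σ,
        abs_nonneg (g σ), mul_nonneg hε (hPnn σ)]
  calc |∫ σ in 0..π, polarPoissonKernel ρ σ * g σ|
      ≤ ∫ σ in 0..π, |polarPoissonKernel ρ σ * g σ| := abs_integral_le_integral_abs pi_pos.le
    _ ≤ ∫ σ in 0..π, (ε * polarPoissonKernel ρ σ + polarPoissonKernel ρ δ * |g σ|) :=
      integral_mono_on_of_le_Ioo pi_pos.le (hg.continuousOn_mul hP.continuousOn).abs
        (hPε.add (hg.abs.const_mul _)) hpointwise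
    _ = ε * π + polarPoissonKernel ρ δ * ∫ σ in 0..π, |g σ| := by
      rw [integral_add hPε (hg.abs.const_mul _), intervalIntegral.integral_const_mul,
        intervalIntegral.integral_const_mul, integral_polarPoissonKernel hρ0 hρ1]

lemma tendsto_integral_polarPoissonKernel_mul {h : ℝ → ℝ} {A : ℝ}
    (hh : IntervalIntegrable h volume 0 π) (hlim : Tendsto h (𝓝[>] 0) (𝓝 A)) :
    Tendsto (fun ρ => ∫ σ in 0..π, polarPoissonKernel ρ σ * h σ) (𝓝[<] 1) (𝓝 (π * A)) := by
  rw [Metric.tendsto_nhds]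
  intro ε hε
  obtain ⟨u, hu0, hu⟩ : ∃ u > 0, ∀ σ ∈ Ioo 0 u, |h σ - A| < ε / (2 * π) := by
    obtain ⟨u, hu, hsub⟩ := mem_nhdsGT_iff_exists_Ioo_subset.1
      (Metric.tendsto_nhds.1 hlim _ (by positivity : 0 < ε / (2 * π)))
    exact ⟨u, hu, fun σ hσ => by simpa [Real.dist_eq] using hsub hσ⟩
  set δ := min (u / 2) π
  have hδ0 : 0 < δ := lt_min (half_pos hu0) pi_pos
  have hsmall : ∀ σ ∈ Ioc 0 δ, |h σ - A| ≤ ε / (2 * π) := fun σ hσ =>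
    (hu σ ⟨hσ.1, hσ.2.trans_lt ((min_le_left _ _).trans_lt (half_lt_self hu0))⟩).le
  have hcosδ : cos δ < 1 := by
    simpa using cos_lt_cos_of_nonneg_of_le_pi le_rfl (min_le_right _ _) hδ0
  set I := ∫ σ in 0..π, |h σ - A|
  have htail : ∀ᶠ ρ in 𝓝[<] 1, polarPoissonKernel ρ δ * I < ε / 2 := by
    have := ((tendsto_polarPoissonKernel_one hcosδ).mul_const I).mono_left
      (nhdsWithin_le_nhds (s := Iio 1))
    rw [zero_mul] at this
    exact this.eventually (gt_mem_nhds (half_pos hε))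
  filter_upwards [htail, Ioo_mem_nhdsLT zero_lt_one] with ρ hρ hρI
  have hP := continuous_polarPoissonKernel hρI.1.le hρI.2
  have hsplit : ∫ σ in 0..π, polarPoissonKernel ρ σ * h σ
      = π * A + ∫ σ in 0..π, polarPoissonKernel ρ σ * (h σ - A) := by
    simp only [mul_sub]
    rw [integral_sub (hh.continuousOn_mul hP.continuousOn)
      ((hP.intervalIntegrable _ _).mul_const A), intervalIntegral.integral_mul_const,
      integral_polarPoissonKernel hρI.1.le hρI.2]
    ring
  rw [Real.dist_eq, hsplit, add_sub_cancel_left]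
  calc _ ≤ ε / (2 * π) * π + polarPoissonKernel ρ δ * I :=
        abs_integral_polarPoissonKernel_mul_le hρI.1.le hρI.2 hδ0.le (by positivity)
          (hh.sub intervalIntegrable_const) hsmall
    _ < ε / (2 * π) * π + ε / 2 := by gcongr
    _ = ε := by field_simp; ring

namespace InnerProductSpace.HarmonicOnNhd

variable {v : ℂ → ℝ}

lemma continuous_comp_circleMap (hv : HarmonicOnNhd v (ball 0 1)) {r : ℝ} (hr : |r| < 1) :
    Continuous fun s => v (circleMap 0 r s) :=
  hv.continuousOn.comp_continuous (continuous_circleMap 0 r) fun s => by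
    rwa [mem_ball_zero_iff, norm_circleMap_zero]

lemma abs_comp_circleMap_sub_le_two_pi (hv : HarmonicOnNhd v (ball 0 1)) {r : ℝ}
    (hr : |r| < 1) (hmono : Monotone fun t => v (circleMap 0 r t) + t) (t : ℝ) :
    |v (circleMap 0 r t) - v 0| ≤ 2 * π := by
  have hmean : (2 * π)⁻¹ * ∫ s in 0..2 * π, v (circleMap 0 r s) = v 0 := by
    rw [← smul_eq_mul, ← Real.circleAverage_def]
    exact (hv.mono (closedBall_subset_ball hr)).circleAverage_eq
  rw [← hmean]
  exact Function.Periodic.abs_sub_average_le_of_monotone_add_id two_pi_pos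
    (fun s => by simp only [periodic_circleMap 0 r s]) hmono t

lemma integral_polarPoissonKernel_mul_of_tendsto (hv : HarmonicOnNhd v (ball 0 1))
    {R : ℕ → ℝ} (hR : ∀ k, R k < 1) (hR1 : Tendsto R atTop (𝓝 1)) {M : ℝ}
    (hM : ∀ k s, |v (circleMap 0 (R k) s)| ≤ M) {g : ℝ → ℝ}
    (hg : ∀ᵐ s, Tendsto (fun k => v (circleMap 0 (R k) s)) atTop (𝓝 (g s)))
    {ρ : ℝ} (hρ0 : 0 ≤ ρ) (hρ1 : ρ < 1) (t : ℝ) :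
    ∫ σ in -π..π, polarPoissonKernel ρ σ * g (t + σ) = 2 * π * v (circleMap 0 ρ t) := by
  obtain ⟨q, hρq, hq1⟩ := exists_between hρ1
  have hratio : Tendsto (fun k => ρ / R k) atTop (𝓝 ρ) := by
    have h := (tendsto_const_nhds (x := ρ)).div hR1 one_ne_zero
    rwa [div_one] at h
  have hRρ : ∀ᶠ k in atTop, ρ < R k := hR1.eventually (lt_mem_nhds hρ1)
  have hlim := tendsto_integral_filter_of_dominated_convergence (l := atTop) (μ := volume)
    (F := fun k σ => polarPoissonKernel (ρ / R k) σ * v (circleMap 0 (R k) (t + σ)))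
    (f := fun σ => polarPoissonKernel ρ σ * g (t + σ)) (a := -π) (b := π)
    (fun _ => 2 / (1 - q) * M) ?meas ?bound intervalIntegrable_const ?lim
  case meas =>
    filter_upwards [hRρ] with k hk
    have hk0 : 0 < R k := hρ0.trans_lt hk
    exact ((continuous_polarPoissonKernel (div_nonneg hρ0 hk0.le) ((div_lt_one hk0).2 hk)).mul
      ((hv.continuous_comp_circleMap (by rw [abs_of_pos hk0]; exact hR k)).comp
        (continuous_const_add t))).aestronglyMeasurable
  case bound =>
    filter_upwards [hRρ, hratio.eventually (ge_mem_nhds hρq)] with k hk hkq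
    refine Eventually.of_forall fun σ _ => ?_
    have hk0 : 0 < R k := hρ0.trans_lt hk
    have hs0 : 0 ≤ ρ / R k := div_nonneg hρ0 hk0.le
    have hs1 : ρ / R k < 1 := (div_lt_one hk0).2 hk
    have hkernel : polarPoissonKernel (ρ / R k) σ ≤ 2 / (1 - q) :=
      calc polarPoissonKernel (ρ / R k) σ ≤ (1 + ρ / R k) / (1 - ρ / R k) :=
            polarPoissonKernel_le hs0 hs1 σ
        _ ≤ 2 / (1 - q) := div_le_div₀ zero_le_two (by linarith) (by linarith) (by linarith)
    rw [Real.norm_eq_abs, abs_mul, abs_of_nonneg (polarPoissonKernel_nonneg hs0 hs1 σ)]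
    exact mul_le_mul hkernel (hM k _) (abs_nonneg _) (div_nonneg zero_le_two (by linarith))
  case lim =>
    filter_upwards [(measurePreserving_add_left volume t).quasiMeasurePreserving.ae hg]
      with σ hσ _
    exact ((continuousAt_polarPoissonKernel_left hρ0 hρ1 σ).tendsto.comp hratio).mul hσ
  refine tendsto_nhds_unique hlim (tendsto_const_nhds.congr' ?_)
  filter_upwards [hRρ] with k hk
  exact ((hv.mono (closedBall_subset_ball (hR k))).integral_polarPoissonKernel_mul hρ0 hk t).symm

theorem exists_monotone_integral_polarPoissonKernel_mul_eq (hv : HarmonicOnNhd v (ball 0 1))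
    (hmono : ∀ r ∈ Ioo (0 : ℝ) 1, Monotone fun t => v (circleMap 0 r t) + t) :
    ∃ ψ : ℝ → ℝ, Monotone ψ ∧ ∀ ρ, 0 ≤ ρ → ρ < 1 → ∀ t,
      ∫ σ in -π..π, polarPoissonKernel ρ σ * (ψ (t + σ) - (t + σ))
        = 2 * π * v (circleMap 0 ρ t) := by
  obtain ⟨r, -, hr, hr1⟩ := exists_seq_strictMono_tendsto' (zero_lt_one' ℝ)
  have hr_abs : ∀ n, |r n| < 1 := fun n => by rw [abs_of_pos (hr n).1]; exact (hr n).2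
  have hbound : ∀ n s, |v (circleMap 0 (r n) s)| ≤ |v 0| + 2 * π := fun n s => by
    have := hv.abs_comp_circleMap_sub_le_two_pi (hr_abs n) (hmono _ (hr n)) s
    have := abs_sub_abs_le_abs_sub (v (circleMap 0 (r n) s)) (v 0)
    linarith
  obtain ⟨φ, ψ, hφ, hψ, hconv⟩ := exists_subseq_tendsto_of_monotone
    (f := fun n s => v (circleMap 0 (r n) s) + s) (fun n => hmono _ (hr n))
    fun s => ⟨|v 0| + 2 * π + |s|, fun n => (abs_add_le _ _).trans (by gcongr; exact hbound n s)⟩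
  have hae : ∀ᵐ s, Tendsto (fun k => v (circleMap 0 (r (φ k)) s)) atTop (𝓝 (ψ s - s)) := by
    filter_upwards [ae_iff.2 (hψ.countable_not_continuousAt.measure_zero volume)] with s hs
    simpa using (hconv s hs).sub_const s
  exact ⟨ψ, hψ, fun ρ hρ0 hρ1 t => hv.integral_polarPoissonKernel_mul_of_tendsto
    (fun k => (hr _).2) (hr1.comp hφ.tendsto_atTop) (fun k => hbound _) hae hρ0 hρ1 t⟩

theorem exists_monotone_tendsto_circleMap (hv : HarmonicOnNhd v (ball 0 1))
    (hmono : ∀ r ∈ Ioo (0 : ℝ) 1, Monotone fun t => v (circleMap 0 r t) + t) :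
    ∃ β : ℝ → ℝ, Monotone β ∧
      ∀ t, Tendsto (fun ρ => v (circleMap 0 ρ t)) (𝓝[<] 1) (𝓝 (β t - t)) := by
  obtain ⟨ψ, hψ, hrep⟩ := hv.exists_monotone_integral_polarPoissonKernel_mul_eq hmono
  refine ⟨fun t => (Function.leftLim ψ t + Function.rightLim ψ t) / 2,
    fun a b hab => by dsimp only; linarith [hψ.leftLim hab, hψ.rightLim hab], fun t => ?_⟩
  set h : ℝ → ℝ := fun σ => ψ (t + σ) + ψ (t - σ) - 2 * t
  have hplus : IntervalIntegrable (fun σ => ψ (t + σ) - (t + σ)) volume (-π) π :=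
    (hψ.comp (monotone_const.add monotone_id)).intervalIntegrable.sub
      ((continuous_const_add t).intervalIntegrable _ _)
  have hh : IntervalIntegrable h volume 0 π :=
    ((hψ.comp (monotone_const.add monotone_id)).intervalIntegrable.add
      (hψ.comp_antitone fun _ _ hab => sub_le_sub_left hab t).intervalIntegrable).sub
      intervalIntegrable_const
  have hfold : ∀ ρ ∈ Ioo (0 : ℝ) 1,
      ∫ σ in 0..π, polarPoissonKernel ρ σ * h σ = 2 * π * v (circleMap 0 ρ t) := fun ρ hρ => by
    rw [← hrep ρ hρ.1.le hρ.2 t, integral_neg_eq_integral_zero_add_comp_neg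
      (hplus.continuousOn_mul (continuous_polarPoissonKernel hρ.1.le hρ.2).continuousOn)]
    refine integral_congr fun σ _ => ?_
    simp only [h, polarPoissonKernel_neg, ← sub_eq_add_neg]
    ring
  refine (((tendsto_integral_polarPoissonKernel_mul hh
    ((hψ.tendsto_comp_add_add_comp_sub t).sub_const (2 * t))).const_mul (2 * π)⁻¹).congr'
      ?_).trans_eq ?_
  · filter_upwards [Ioo_mem_nhdsLT zero_lt_one] with ρ hρ
    rw [hfold ρ hρ]
    field_simp
  · congr 1
    field_simp
    ring

end InnerProductSpace.HarmonicOnNhd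

lemma hasDerivAt_im_comp_circleMap {H : ℂ → ℂ} {r t : ℝ}
    (hH : DifferentiableAt ℂ H (circleMap 0 r t)) :
    HasDerivAt (fun s => (H (circleMap 0 r s)).im)
      (circleMap 0 r t * deriv H (circleMap 0 r t)).re t := by
  refine (Complex.imCLM.hasFDerivAt.comp_hasDerivAt t
    (hH.hasDerivAt.comp t (hasDerivAt_circleMap 0 r t))).congr_deriv ?_
  simp only [Complex.imCLM_apply, Complex.mul_im, Complex.mul_re, Complex.I_re, Complex.I_im]
  ring

lemma IsLogBranch.mul_deriv_eq {f L : ℂ → ℂ} (hf : DifferentiableOn ℂ f (ball 0 1))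
    (hL : IsLogBranch f L) {z : ℂ} (hz : z ∈ ball (0 : ℂ) 1) (hz0 : z ≠ 0) :
    z * deriv L z = z * deriv f z / f z - 1 := by
  have hfz : f z ≠ 0 := fun h => Complex.exp_ne_zero (L z) (by rw [hL.2.2 z hz hz0, h, zero_div])
  have hLd : HasDerivAt L (deriv L z) z :=
    (hL.1.differentiableAt (isOpen_ball.mem_nhds hz)).hasDerivAt
  have hfd : HasDerivAt f (deriv f z) z :=
    (hf.differentiableAt (isOpen_ball.mem_nhds hz)).hasDerivAt
  have hexp : (fun w => Complex.exp (L w)) =ᶠ[𝓝 z] fun w => f w / w := by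
    filter_upwards [(isOpen_ball.sdiff isClosed_singleton).mem_nhds ⟨hz, hz0⟩] with w hw
    exact hL.2.2 w hw.1 hw.2
  have h := (hLd.cexp.congr_of_eventuallyEq hexp.symm).unique (hfd.div (hasDerivAt_id z) hz0)
  rw [hL.2.2 z hz hz0] at h
  field_simp at h ⊢
  linear_combination h

lemma re_one_sub_tan_mul_I_mul {lam : ℝ} (hlam : cos lam ≠ 0) (w : ℂ) :
    ((1 - tan lam * Complex.I) * w).re
      = (Complex.exp (-(lam : ℂ) * Complex.I) * w).re / cos lam := by
  rw [show -(lam : ℂ) * Complex.I = ((-lam : ℝ) : ℂ) * Complex.I by push_cast; ring]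
  simp only [Complex.mul_re, Complex.exp_ofReal_mul_I_re, Complex.exp_ofReal_mul_I_im, cos_neg,
    sin_neg, Complex.sub_re, Complex.sub_im, Complex.one_re, Complex.one_im, Complex.mul_im,
    Complex.ofReal_re, Complex.ofReal_im, Complex.I_re, Complex.I_im, tan_eq_sin_div_cos]
  field_simp
  ring

lemma lambdaArgBranch_eq_im (lam : ℝ) (L : ℂ → ℂ) (z : ℂ) :
    lambdaArgBranch lam L z = ((1 - tan lam * Complex.I) * L z).im := by
  simp only [lambdaArgBranch, Complex.mul_im, Complex.sub_re, Complex.sub_im, Complex.one_re,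
    Complex.one_im, Complex.mul_re, Complex.ofReal_re, Complex.ofReal_im, Complex.I_re,
    Complex.I_im]
  ring

lemma IsLogBranch.harmonicOnNhd_lambdaArgBranch {f L : ℂ → ℂ} (hL : IsLogBranch f L)
    (lam : ℝ) : HarmonicOnNhd (lambdaArgBranch lam L) (ball 0 1) := fun z hz => by
  have h : AnalyticAt ℂ (fun w => (1 - tan lam * Complex.I) * L w) z :=
    ((differentiableOn_const _).mul hL.1).analyticAt (isOpen_ball.mem_nhds hz)
  simpa only [← lambdaArgBranch_eq_im] using h.harmonicAt_im

lemma SpiralClass.monotone_lambdaArgBranch_circleMap_add {lam : ℝ} (hlam : 0 < cos lam)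
    {f L : ℂ → ℂ} (hf : f ∈ SpiralClass lam) (hL : IsLogBranch f L) {r : ℝ}
    (hr : r ∈ Ioo (0 : ℝ) 1) :
    Monotone fun t => lambdaArgBranch lam L (circleMap 0 r t) + t := by
  obtain ⟨hfd, -, -, -, hpos⟩ := hf
  have hz : ∀ t, circleMap 0 r t ∈ ball (0 : ℂ) 1 := fun t => by
    rw [mem_ball_zero_iff, norm_circleMap_zero, abs_of_pos hr.1]
    exact hr.2
  have hz0 : ∀ t, circleMap 0 r t ≠ 0 := fun t => circleMap_ne_center hr.1.ne'
  have hderiv : ∀ t, HasDerivAt (fun s => lambdaArgBranch lam L (circleMap 0 r s) + s)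
      ((Complex.exp (-(lam : ℂ) * Complex.I) * circleMap 0 r t * deriv f (circleMap 0 r t)
        / f (circleMap 0 r t)).re / cos lam) t := fun t => by
    have hLz := hL.1.differentiableAt (isOpen_ball.mem_nhds (hz t))
    have h := (hasDerivAt_im_comp_circleMap (hLz.const_mul (1 - tan lam * Complex.I))).add
      (hasDerivAt_id' t)
    simp only [← lambdaArgBranch_eq_im, deriv_const_mul _ hLz] at h
    refine h.congr_deriv ?_
    rw [mul_left_comm, hL.mul_deriv_eq hfd (hz t) (hz0 t), mul_sub, mul_one, Complex.sub_re,
      re_one_sub_tan_mul_I_mul hlam.ne',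
      show ((1 : ℂ) - tan lam * Complex.I).re = 1 by simp, sub_add_cancel]
    congr 2
    ring
  exact monotone_of_deriv_nonneg (fun t => (hderiv t).differentiableAt) fun t => by
    rw [(hderiv t).deriv]
    exact div_nonneg (hpos _ (hz t) (hz0 t)).le hlam.le

/-- for `f ∈ F_λ`, the radial limits `U(t) = lim_{r→1−} u_f(r e^{it})`
exist for all `t`, the function `β(t) = U(t) + t` is non-decreasing, and
`β(t+2π) = β(t) + 2π`. -/
theorem radial_limit_lambda_argument (lam : ℝ)
    (hlam : lam ∈ Set.Ioo (-(Real.pi / 2)) (Real.pi / 2))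
    (f : ℂ → ℂ) (hf : f ∈ SpiralClass lam) (L : ℂ → ℂ) (hL : IsLogBranch f L) :
    ∃ U : ℝ → ℝ,
      (∀ t : ℝ, Tendsto
          (fun r : ℝ => lambdaArgBranch lam L ((r : ℂ) * Complex.exp ((t : ℂ) * Complex.I)))
          (𝓝[<] 1) (𝓝 (U t))) ∧
      Monotone (fun t : ℝ => U t + t) ∧
      ∀ t : ℝ, U (t + 2 * Real.pi) + (t + 2 * Real.pi) = (U t + t) + 2 * Real.pi := by
  obtain ⟨β, hβ, hlim⟩ :=
    (hL.harmonicOnNhd_lambdaArgBranch lam).exists_monotone_tendsto_circleMap fun _ hr =>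
      SpiralClass.monotone_lambdaArgBranch_circleMap_add (cos_pos_of_mem_Ioo hlam) hf hL hr
  have hcircle : ∀ r t : ℝ, (r : ℂ) * Complex.exp (t * Complex.I) = circleMap 0 r t := by
    simp [circleMap]
  refine ⟨fun t => β t - t, fun t => by simpa only [hcircle] using hlim t,
    by simpa using hβ, fun t => ?_⟩
  have hperiod : ∀ r, circleMap 0 r (t + 2 * π) = circleMap 0 r t :=
    fun r => periodic_circleMap 0 r t
  have hU := tendsto_nhds_unique (hlim (t + 2 * π)) (by simpa only [hperiod] using hlim t)
  dsimp only
  linarith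
end

section
/- Let λ ∈ (−π/2, π/2), let f ∈ F_λ and let g ∈ S* be the starlike function corresponding to f via L_f = e^{iλ}(cos λ)·L_g. Then log M(r, f) = cos²λ · log M(r, g) + O(1) as r → 1−; i.e. there exist constants K > 0 and r₀ ∈ (0, 1) such that | log M(r, f) − cos²λ · log M(r, g) | ≤ K for all r₀ ≤ r < 1. -/
open Set Metric Filter Topology

/-- The maximum modulus `M(r, f) = max_{|z| = r} |f(z)|`. -/
noncomputable def maxModulus (f : ℂ → ℂ) (r : ℝ) : ℝ :=
  sSup ((fun z => ‖f z‖) '' sphere (0 : ℂ) r)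

/-!
On the circle `|z| = r` we have `log |f z| = log r + Re L_f z`, so
`log M(r, f) = log r + max Re L_f`, and `Re L_f = cos²λ · Re L_g - sin λ cos λ · Im L_g`.
For starlike `g`, `Im L_g` is bounded by `2π` on every circle: `t ↦ Im L_g (r e^{it}) + t` is
increasing, so the `2π`-periodic function `Im L_g (r e^{it})` oscillates by at most `2π`, and by
the mean value property it takes both signs. Hence the maxima of `Re L_f` and `cos²λ · Re L_g`
differ by at most `2π`, and what remains, `sin²λ · log r`, is bounded for `r ≥ 1/2`.
-/

lemma Function.Periodic.sub_le_of_monotone_add {φ : ℝ → ℝ} {p : ℝ} (hφ : Function.Periodic φ p)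
    (hp : 0 < p) (hmono : Monotone fun t => φ t + t) (a b : ℝ) : φ a - φ b ≤ p := by
  have hmem := toIcoMod_mem_Ico hp a b
  have hφb : φ (toIcoMod hp a b) = φ b := by
    rw [toIcoMod, hφ.sub_zsmul_eq]
  have : φ a + a ≤ φ b + toIcoMod hp a b := hφb ▸ hmono hmem.1
  linarith [hmem.2]

lemma mul_deriv_div_eq_one_add {g L : ℂ → ℂ} {z : ℂ} (hL : DifferentiableAt ℂ L z)
    (hg : g =ᶠ[𝓝 z] fun w => w * Complex.exp (L w)) (hz : z ≠ 0) :
    z * deriv g z / g z = 1 + z * deriv L z := by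
  have hderiv : HasDerivAt (fun w => w * Complex.exp (L w))
      (1 * Complex.exp (L z) + z * (Complex.exp (L z) * deriv L z)) z :=
    (hasDerivAt_id z).mul hL.hasDerivAt.cexp
  rw [hg.deriv_eq, hderiv.deriv, hg.eq_of_nhds]
  field_simp [Complex.exp_ne_zero]

lemma hasDerivAt_im_comp_circleMap_add {L : ℂ → ℂ} {r θ : ℝ}
    (hL : DifferentiableAt ℂ L (circleMap 0 r θ)) :
    HasDerivAt (fun t => (L (circleMap 0 r t)).im + t)
      ((circleMap 0 r θ * deriv L (circleMap 0 r θ)).re + 1) θ := by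
  have hcomp : HasDerivAt (fun t => L (circleMap 0 r t))
      (circleMap 0 r θ * Complex.I * deriv L (circleMap 0 r θ)) θ := by
    simpa [mul_comm, Function.comp_def] using
      (hL.hasDerivAt.hasFDerivAt.restrictScalars ℝ).comp_hasDerivAt θ (hasDerivAt_circleMap 0 r θ)
  have him : HasDerivAt (fun t => (L (circleMap 0 r t)).im)
      (circleMap 0 r θ * Complex.I * deriv L (circleMap 0 r θ)).im θ :=
    Complex.imCLM.hasFDerivAt.comp_hasDerivAt θ hcomp
  have hval : (circleMap 0 r θ * Complex.I * deriv L (circleMap 0 r θ)).im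
      = (circleMap 0 r θ * deriv L (circleMap 0 r θ)).re := by
    rw [mul_right_comm, Complex.mul_I_im]
  exact hval ▸ him.add (hasDerivAt_id θ)

lemma exists_mem_sphere_im_le_im {L : ℂ → ℂ} {c : ℂ} {r : ℝ} (hr : 0 < r)
    (hL : DiffContOnCl ℂ L (ball c r)) : ∃ z ∈ sphere c r, (L c).im ≤ (L z).im := by
  by_contra! hlt
  have hLs : ContinuousOn L (sphere c r) :=
    hL.continuousOn.mono (closure_ball c hr.ne' ▸ sphere_subset_closedBall)
  have hcont : ContinuousOn (fun z => (L z).im) (sphere c r) :=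
    Complex.continuous_im.comp_continuousOn hLs
  obtain ⟨z₀, hz₀, hmax⟩ := (isCompact_sphere c r).exists_isMaxOn
    (NormedSpace.sphere_nonempty.mpr hr.le) hcont
  have hr' : |r| = r := abs_of_pos hr
  have hmean : Real.circleAverage (fun z => (L z).im) c r = (L c).im := by
    have hL' : DiffContOnCl ℂ L (ball c |r|) := by rwa [hr']
    rw [← hL'.circleAverage]
    exact Complex.imCLM.circleAverage_comp_comm (hLs.circleIntegrable hr.le)
  have : Real.circleAverage (fun z => (L z).im) c r ≤ (L z₀).im :=
    Real.circleAverage_mono_on_of_le_circle (hcont.circleIntegrable hr.le) fun _ hz =>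
      hmax (hr' ▸ hz)
  linarith [hlt z₀ hz₀]

lemma csSup_image_le_csSup_image_add {α : Type*} {s : Set α} {u v : α → ℝ} {C : ℝ}
    (hs : s.Nonempty) (hv : BddAbove (v '' s)) (h : ∀ x ∈ s, u x ≤ v x + C) :
    sSup (u '' s) ≤ sSup (v '' s) + C :=
  csSup_le (hs.image u) <| forall_mem_image.mpr fun x hx =>
    (h x hx).trans (by gcongr; exact le_csSup hv (mem_image_of_mem v hx))

lemma abs_csSup_image_sub_csSup_image_le {α : Type*} {s : Set α} {u v : α → ℝ} {C : ℝ}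
    (hs : s.Nonempty) (hu : BddAbove (u '' s)) (hv : BddAbove (v '' s))
    (h : ∀ x ∈ s, |u x - v x| ≤ C) : |sSup (u '' s) - sSup (v '' s)| ≤ C := by
  rw [abs_sub_le_iff]
  constructor
  · linarith [csSup_image_le_csSup_image_add hs hv fun x hx =>
      sub_le_iff_le_add'.mp (abs_sub_le_iff.mp (h x hx)).1]
  · linarith [csSup_image_le_csSup_image_add hs hu fun x hx =>
      sub_le_iff_le_add'.mp (abs_sub_le_iff.mp (h x hx)).2]

lemma log_maxModulus_of_eq_mul_exp {f L : ℂ → ℂ} {r : ℝ} (hr : 0 < r)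
    (hL : ContinuousOn L (sphere 0 r))
    (hf : ∀ z ∈ sphere (0 : ℂ) r, f z = z * Complex.exp (L z)) :
    Real.log (maxModulus f r) = Real.log r + sSup ((fun z => (L z).re) '' sphere 0 r) := by
  have hnorm : maxModulus f r =
      sSup ((fun x => r * Real.exp x) '' ((fun z => (L z).re) '' sphere 0 r)) := by
    rw [maxModulus, image_image]
    refine congrArg sSup (image_congr fun z hz => ?_)
    rw [hf z hz, norm_mul, Complex.norm_exp, mem_sphere_zero_iff_norm.mp hz]
  have hbdd : BddAbove ((fun z => (L z).re) '' sphere 0 r) :=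
    (isCompact_sphere 0 r).bddAbove_image (Complex.continuous_re.comp_continuousOn hL)
  rw [hnorm, ← Monotone.map_csSup_of_continuousAt (by fun_prop)
    (fun x y hxy => mul_le_mul_of_nonneg_left (Real.exp_le_exp.mpr hxy) hr.le)
    ((NormedSpace.sphere_nonempty.mpr hr.le).image _) hbdd,
    Real.log_mul hr.ne' (Real.exp_ne_zero _), Real.log_exp]

lemma abs_re_exp_mul_cos_mul_sub_le (lam : ℝ) (w : ℂ) :
    |(Complex.exp ((lam : ℂ) * Complex.I) * (Real.cos lam : ℂ) * w).re - Real.cos lam ^ 2 * w.re|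
      ≤ |w.im| := by
  have hre : (Complex.exp ((lam : ℂ) * Complex.I) * (Real.cos lam : ℂ) * w).re
      - Real.cos lam ^ 2 * w.re = -(Real.sin lam * Real.cos lam) * w.im := by
    simp only [Complex.mul_re, Complex.mul_im, Complex.exp_ofReal_mul_I_re,
      Complex.exp_ofReal_mul_I_im, Complex.ofReal_re, Complex.ofReal_im]
    ring
  rw [hre, abs_mul, abs_neg, abs_mul]
  exact mul_le_of_le_one_left (abs_nonneg _)
    (mul_le_one₀ (Real.abs_sin_le_one lam) (abs_nonneg _) (Real.abs_cos_le_one lam))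

lemma IsLogBranch.eventuallyEq_mul_exp {f L : ℂ → ℂ} (hL : IsLogBranch f L) {z : ℂ}
    (hz : z ∈ ball (0 : ℂ) 1) (hz0 : z ≠ 0) : f =ᶠ[𝓝 z] fun w => w * Complex.exp (L w) := by
  filter_upwards [(isOpen_ball.inter isOpen_compl_singleton).mem_nhds ⟨hz, hz0⟩]
    with w ⟨hw, hw0⟩
  rw [hL.2.2 w hw hw0, mul_div_cancel₀ _ hw0]

/-- `Im L (r e^{it}) + t` is a continuous branch of `arg g (r e^{it})`; its derivative is
`Re (z g'(z) / g(z)) > 0`. -/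
lemma IsLogBranch.monotone_im_comp_circleMap_add {g L : ℂ → ℂ} (hg : g ∈ SpiralClass 0)
    (hL : IsLogBranch g L) {r : ℝ} (hr : r ∈ Ioo (0 : ℝ) 1) :
    Monotone fun t => (L (circleMap 0 r t)).im + t := by
  refine (strictMono_of_deriv_pos fun θ => ?_).monotone
  have hz : circleMap 0 r θ ∈ ball (0 : ℂ) 1 :=
    sphere_subset_ball hr.2 (circleMap_mem_sphere 0 hr.1.le θ)
  have hz0 : circleMap 0 r θ ≠ 0 := circleMap_ne_center hr.1.ne'
  have hLz : DifferentiableAt ℂ L (circleMap 0 r θ) :=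
    hL.1.differentiableAt (isOpen_ball.mem_nhds hz)
  have hstar := hg.2.2.2.2 _ hz hz0
  simp only [Complex.ofReal_zero, neg_zero, zero_mul, Complex.exp_zero, one_mul] at hstar
  rw [mul_deriv_div_eq_one_add hLz (hL.eventuallyEq_mul_exp hz hz0) hz0] at hstar
  rw [(hasDerivAt_im_comp_circleMap_add hLz).deriv]
  simpa [add_comm] using hstar

lemma IsLogBranch.im_sub_im_le_two_pi {g L : ℂ → ℂ} (hg : g ∈ SpiralClass 0)
    (hL : IsLogBranch g L) {r : ℝ} (hr : r ∈ Ioo (0 : ℝ) 1) {z w : ℂ}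
    (hz : z ∈ sphere (0 : ℂ) r) (hw : w ∈ sphere (0 : ℂ) r) :
    (L z).im - (L w).im ≤ 2 * Real.pi := by
  have hper : Function.Periodic (fun t => (L (circleMap 0 r t)).im) (2 * Real.pi) := fun t => by
    simp only [periodic_circleMap 0 r t]
  rw [← abs_of_pos hr.1, ← range_circleMap] at hz hw
  obtain ⟨θ, rfl⟩ := hz
  obtain ⟨φ, rfl⟩ := hw
  exact hper.sub_le_of_monotone_add Real.two_pi_pos (hL.monotone_im_comp_circleMap_add hg hr) θ φ

lemma IsLogBranch.abs_im_le_two_pi {g L : ℂ → ℂ} (hg : g ∈ SpiralClass 0)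
    (hL : IsLogBranch g L) {r : ℝ} (hr : r ∈ Ioo (0 : ℝ) 1) {z : ℂ}
    (hz : z ∈ sphere (0 : ℂ) r) : |(L z).im| ≤ 2 * Real.pi := by
  have hdiff : DiffContOnCl ℂ L (ball 0 r) :=
    (hL.1.mono (closure_ball (0 : ℂ) hr.1.ne' ▸ closedBall_subset_ball hr.2)).diffContOnCl
  obtain ⟨w₁, hw₁, h₁⟩ := exists_mem_sphere_im_le_im hr.1 hdiff
  obtain ⟨w₂, hw₂, h₂⟩ := exists_mem_sphere_im_le_im hr.1 hdiff.neg
  simp only [hL.2.1, Pi.neg_apply, Complex.neg_im, Complex.zero_im, neg_zero] at h₁ h₂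
  rw [abs_le]
  constructor
  · linarith [hL.im_sub_im_le_two_pi hg hr hw₁ hz]
  · linarith [hL.im_sub_im_le_two_pi hg hr hz hw₂]

lemma IsLogBranch.log_maxModulus_eq {f L : ℂ → ℂ} (hL : IsLogBranch f L) {r : ℝ}
    (hr : r ∈ Ioo (0 : ℝ) 1) :
    Real.log (maxModulus f r) = Real.log r + sSup ((fun z => (L z).re) '' sphere 0 r) :=
  log_maxModulus_of_eq_mul_exp hr.1 (hL.1.continuousOn.mono (sphere_subset_ball hr.2)) fun _ hz =>
    (hL.eventuallyEq_mul_exp (sphere_subset_ball hr.2 hz) (ne_of_mem_sphere hz hr.1.ne')).eq_of_nhds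

theorem log_maxModulus_comparison_general (lam : ℝ)
    (f g : ℂ → ℂ) (hg : g ∈ SpiralClass 0)
    (Lf Lg : ℂ → ℂ) (hLf : IsLogBranch f Lf) (hLg : IsLogBranch g Lg)
    (hcorr : ∀ z ∈ ball (0 : ℂ) 1,
      Lf z = Complex.exp ((lam : ℂ) * Complex.I) * (Real.cos lam : ℂ) * Lg z) :
    ∃ K > (0 : ℝ), ∃ r₀ ∈ Set.Ioo (0 : ℝ) 1, ∀ r : ℝ, r₀ ≤ r → r < 1 →
      |Real.log (maxModulus f r) - Real.cos lam ^ 2 * Real.log (maxModulus g r)| ≤ K := by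
  refine ⟨2 * Real.pi + Real.log 2, by positivity, 1 / 2, by norm_num, fun r hr₀ hr₁ => ?_⟩
  have hr : r ∈ Ioo (0 : ℝ) 1 := ⟨by linarith, hr₁⟩
  have hsphere : sphere (0 : ℂ) r ⊆ ball 0 1 := sphere_subset_ball hr.2
  have hLf_cont : ContinuousOn Lf (sphere 0 r) := hLf.1.continuousOn.mono hsphere
  have hLg_cont : ContinuousOn Lg (sphere 0 r) := hLg.1.continuousOn.mono hsphere
  have hsup : |sSup ((fun z => (Lf z).re) '' sphere 0 r)
      - Real.cos lam ^ 2 * sSup ((fun z => (Lg z).re) '' sphere 0 r)| ≤ 2 * Real.pi := by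
    rw [← smul_eq_mul, ← Real.sSup_smul_of_nonneg (sq_nonneg _), ← image_smul, image_image]
    refine abs_csSup_image_sub_csSup_image_le (NormedSpace.sphere_nonempty.mpr hr.1.le) ?_ ?_
      fun z hz => ?_
    · exact (isCompact_sphere 0 r).bddAbove_image (by fun_prop)
    · exact (isCompact_sphere 0 r).bddAbove_image (by fun_prop)
    · rw [hcorr z (hsphere hz)]
      exact (abs_re_exp_mul_cos_mul_sub_le lam (Lg z)).trans (hLg.abs_im_le_two_pi hg hr hz)
  have hlog_r : |Real.log r| ≤ Real.log 2 := by
    rw [abs_of_nonpos (Real.log_nonpos hr.1.le hr₁.le), neg_le, ← Real.log_inv]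
    exact Real.log_le_log (by norm_num) (by linarith)
  have hsin : |Real.sin lam ^ 2 * Real.log r| ≤ Real.log 2 := by
    rw [abs_mul, abs_sq]
    exact mul_le_of_le_one_left (abs_nonneg _) (Real.sin_sq_le_one lam) |>.trans hlog_r
  rw [hLf.log_maxModulus_eq hr, hLg.log_maxModulus_eq hr]
  calc _ = |Real.sin lam ^ 2 * Real.log r + (sSup ((fun z => (Lf z).re) '' sphere 0 r)
        - Real.cos lam ^ 2 * sSup ((fun z => (Lg z).re) '' sphere 0 r))| := by
        rw [Real.sin_sq]; ring_nf
    _ ≤ _ := (abs_add_le _ _).trans (by linarith)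

/-- if `f ∈ F_λ` and `g ∈ S*` correspond via `L_f = e^{iλ}(cos λ)·L_g`,
then `log M(r,f) = cos²λ · log M(r,g) + O(1)` as `r → 1−`. -/
theorem log_maxModulus_comparison (lam : ℝ)
    (hlam : lam ∈ Set.Ioo (-(Real.pi / 2)) (Real.pi / 2))
    (f g : ℂ → ℂ) (hf : f ∈ SpiralClass lam) (hg : g ∈ SpiralClass 0)
    (Lf Lg : ℂ → ℂ) (hLf : IsLogBranch f Lf) (hLg : IsLogBranch g Lg)
    (hcorr : ∀ z ∈ ball (0 : ℂ) 1,
      Lf z = Complex.exp ((lam : ℂ) * Complex.I) * (Real.cos lam : ℂ) * Lg z) :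
    ∃ K > (0 : ℝ), ∃ r₀ ∈ Set.Ioo (0 : ℝ) 1, ∀ r : ℝ, r₀ ≤ r → r < 1 →
      |Real.log (maxModulus f r) - Real.cos lam ^ 2 * Real.log (maxModulus g r)| ≤ K :=
  log_maxModulus_comparison_general lam f g hg Lf Lg hLf hLg hcorr
end

section
/- Let g₀(z) = (1/(1−z))·Log(1/(1−z)) for z ∈ 𝔻 (principal logarithm), extended by g₀(0) = 0; equivalently g₀(z) = Σ_{n≥1} (1 + 1/2 + ⋯ + 1/n) zⁿ. Then g₀ is analytic on 𝔻 with g₀(0) = 0, g₀'(0) = 1, g₀(z) ≠ 0 for 0 < |z| < 1, and Re( z·g₀'(z)/g₀(z) ) > −1/2 + 1/(2 log 2) > 0 for all 0 < |z| < 1; in particular g₀ is starlike. -/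
/-!
With `w = (1 - z)⁻¹` the unit disk becomes the half-plane `Re w > 1/2`, and
`z g₀'(z) / g₀(z) = (w - 1) + (w - 1) / Log w`. The last term is `∫₀¹ w ^ t dt`, and
`Re (w ^ t) ≥ (Re w) ^ t > 2 ^ (-t)` by concavity of `cos` and of `x ↦ x ^ t`, so its real part
exceeds `∫₀¹ 2 ^ (-t) dt = 1 / (2 log 2)`.
-/

open Set Metric

theorem Real.cos_rpow_le_cos_mul {θ t : ℝ} (hθ : |θ| ≤ Real.pi / 2) (ht₀ : 0 ≤ t) (ht₁ : t ≤ 1) :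
    Real.cos θ ^ t ≤ Real.cos (θ * t) := by
  have hθ' : θ ∈ Icc (-(Real.pi / 2)) (Real.pi / 2) := abs_le.1 hθ
  have h₀ : (0 : ℝ) ∈ Icc (-(Real.pi / 2)) (Real.pi / 2) := by
    constructor <;> linarith [Real.pi_pos]
  have amgm := Real.geom_mean_le_arith_mean2_weighted ht₀ (sub_nonneg.2 ht₁)
    (Real.cos_nonneg_of_mem_Icc hθ') zero_le_one (add_sub_cancel t 1)
  have concave := strictConcaveOn_cos_Icc.concaveOn.2 hθ' h₀ ht₀ (sub_nonneg.2 ht₁)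
    (add_sub_cancel t 1)
  simp only [Real.one_rpow, mul_one, smul_eq_mul, mul_zero, add_zero, Real.cos_zero]
    at amgm concave
  rw [mul_comm θ]
  linarith

theorem Complex.re_rpow_le_re_cpow {v : ℂ} (hv : 0 ≤ v.re) {t : ℝ} (ht₀ : 0 ≤ t) (ht₁ : t ≤ 1) :
    v.re ^ t ≤ (v ^ (t : ℂ)).re := by
  have hcos : 0 ≤ Real.cos v.arg :=
    Real.cos_nonneg_of_mem_Icc (abs_le.1 (Complex.abs_arg_le_pi_div_two_iff.2 hv))
  rw [Complex.cpow_ofReal_re, ← Complex.norm_mul_cos_arg, Real.mul_rpow (norm_nonneg v) hcos]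
  exact mul_le_mul_of_nonneg_left
    (Real.cos_rpow_le_cos_mul (Complex.abs_arg_le_pi_div_two_iff.2 hv) ht₀ ht₁)
    (Real.rpow_nonneg (norm_nonneg v) t)

theorem Complex.log_ne_zero_of_ne_one {v : ℂ} (hv₀ : v ≠ 0) (hv₁ : v ≠ 1) : Complex.log v ≠ 0 :=
  fun h => hv₁ (by rw [← Complex.exp_log hv₀, h, Complex.exp_zero])

theorem integral_const_cpow {v : ℂ} (hv₀ : v ≠ 0) (hv₁ : v ≠ 1) (a b : ℝ) :
    ∫ t in a..b, v ^ (t : ℂ) = (v ^ (b : ℂ) - v ^ (a : ℂ)) / Complex.log v := by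
  simp only [Complex.cpow_def_of_ne_zero hv₀]
  exact integral_exp_mul_complex (Complex.log_ne_zero_of_ne_one hv₀ hv₁)

theorem integral_const_rpow {x : ℝ} (hx₀ : 0 < x) (hx₁ : x ≠ 1) (a b : ℝ) :
    ∫ t in a..b, x ^ t = (x ^ b - x ^ a) / Real.log x := by
  apply Complex.ofReal_injective
  have hx₀' : (x : ℂ) ≠ 0 := Complex.ofReal_ne_zero.2 hx₀.ne'
  have hx₁' : (x : ℂ) ≠ 1 := Complex.ofReal_ne_one.2 hx₁
  push_cast [← intervalIntegral.integral_ofReal, Complex.ofReal_cpow hx₀.le,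
    Complex.ofReal_log hx₀.le]
  exact integral_const_cpow hx₀' hx₁' a b

theorem Complex.sub_one_div_log_lt_re {x : ℝ} (hx₀ : 0 < x) (hx₁ : x ≠ 1) {v : ℂ} (hxv : x < v.re)
    (hv₁ : v ≠ 1) : (x - 1) / Real.log x < ((v - 1) / Complex.log v).re := by
  have hv₀ : v ≠ 0 := fun h => by simp [h] at hxv; linarith
  have hcont : Continuous fun t : ℝ => v ^ (t : ℂ) :=
    Continuous.const_cpow Complex.continuous_ofReal (Or.inl hv₀)
  have hint := (integral_const_cpow hv₀ hv₁ 0 1).symm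
  have hintx := integral_const_rpow hx₀ hx₁ 0 1
  simp only [Complex.ofReal_one, Complex.ofReal_zero, Complex.cpow_one, Complex.cpow_zero,
    Real.rpow_one, Real.rpow_zero] at hint hintx
  have hre := intervalIntegral.intervalIntegral_re
    (hcont.intervalIntegrable (μ := MeasureTheory.volume) 0 1)
  simp only [RCLike.re_to_complex] at hre
  rw [← hintx, hint, ← hre]
  refine intervalIntegral.integral_lt_integral_of_continuousOn_of_le_of_exists_lt zero_lt_one
    (Real.continuous_const_rpow hx₀.ne').continuousOn
    (Complex.continuous_re.comp hcont).continuousOn (fun t ht => ?_) ⟨1, by simp, by simpa⟩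
  calc x ^ t ≤ v.re ^ t := Real.rpow_le_rpow hx₀.le hxv.le ht.1.le
    _ ≤ (v ^ (t : ℂ)).re := Complex.re_rpow_le_re_cpow (hx₀.trans hxv).le ht.1.le ht.2

theorem one_half_lt_re_inv_one_sub {z : ℂ} (hz : ‖z‖ < 1) : 1 / 2 < ((1 - z)⁻¹).re := by
  have hz₁ : 1 - z ≠ 0 := sub_ne_zero.2 fun h => by simp [← h] at hz
  have hsq : z.re ^ 2 + z.im ^ 2 < 1 := by
    rw [← Complex.normSq_add_mul_I, Complex.re_add_im, Complex.normSq_eq_norm_sq]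
    nlinarith [norm_nonneg z]
  rw [Complex.inv_re, lt_div_iff₀ (Complex.normSq_pos.2 hz₁), Complex.normSq_apply]
  simp only [Complex.sub_re, Complex.sub_im, Complex.one_re, Complex.one_im]
  nlinarith

theorem hasDerivAt_inv_one_sub_mul_log {z : ℂ} (hz : (1 - z)⁻¹ ∈ Complex.slitPlane) :
    HasDerivAt (fun z => (1 - z)⁻¹ * Complex.log (1 - z)⁻¹)
      ((1 - z)⁻¹ ^ 2 * (Complex.log (1 - z)⁻¹ + 1)) z := by
  have hz₁ : 1 - z ≠ 0 := fun h => Complex.slitPlane_ne_zero hz (by simp [h])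
  have hinv := ((hasDerivAt_id' z).const_sub 1).fun_inv hz₁
  rw [neg_neg, one_div, ← inv_pow] at hinv
  refine (hinv.mul (hinv.clog hz)).congr_deriv ?_
  field_simp

theorem mul_deriv_div_inv_one_sub_mul_log {z : ℂ} (hz : (1 - z)⁻¹ ∈ Complex.slitPlane)
    (hz₀ : z ≠ 0) :
    z * deriv (fun z => (1 - z)⁻¹ * Complex.log (1 - z)⁻¹) z /
        ((1 - z)⁻¹ * Complex.log (1 - z)⁻¹) =
      ((1 - z)⁻¹ - 1) + ((1 - z)⁻¹ - 1) / Complex.log (1 - z)⁻¹ := by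
  have hz₁ : 1 - z ≠ 0 := fun h => Complex.slitPlane_ne_zero hz (by simp [h])
  have hlog : Complex.log (1 - z)⁻¹ ≠ 0 := Complex.log_ne_zero_of_ne_one
    (Complex.slitPlane_ne_zero hz) (by simpa [inv_eq_one, sub_eq_self] using hz₀)
  rw [(hasDerivAt_inv_one_sub_mul_log hz).deriv]
  generalize Complex.log (1 - z)⁻¹ = L at hlog ⊢
  field_simp
  ring

/-- the function `g₀(z) = (1/(1−z))·Log(1/(1−z))` (principal logarithm,
with `g₀(0) = 0`) is analytic on `𝔻`, normalized (`g₀(0) = 0`, `g₀'(0) = 1`),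
non-vanishing on the punctured disk, and satisfies
`Re(z·g₀'(z)/g₀(z)) > −1/2 + 1/(2 log 2) > 0` there; in particular `g₀` is starlike. -/
theorem g0_starlike (g₀ : ℂ → ℂ)
    (hg₀ : g₀ = fun z : ℂ => (1 - z)⁻¹ * Complex.log ((1 - z)⁻¹)) :
    DifferentiableOn ℂ g₀ (ball (0 : ℂ) 1) ∧
    g₀ 0 = 0 ∧ deriv g₀ 0 = 1 ∧
    (∀ z ∈ ball (0 : ℂ) 1, z ≠ 0 → g₀ z ≠ 0) ∧
    (0 : ℝ) < -(1 / 2) + 1 / (2 * Real.log 2) ∧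
    (∀ z ∈ ball (0 : ℂ) 1, z ≠ 0 →
      -(1 / 2) + 1 / (2 * Real.log 2) < (z * deriv g₀ z / g₀ z).re) := by
  subst hg₀
  have hre (z : ℂ) (hz : z ∈ ball (0 : ℂ) 1) : 1 / 2 < ((1 - z)⁻¹).re :=
    one_half_lt_re_inv_one_sub (mem_ball_zero_iff.1 hz)
  have hslit (z : ℂ) (hz : z ∈ ball (0 : ℂ) 1) : (1 - z)⁻¹ ∈ Complex.slitPlane :=
    Complex.mem_slitPlane_iff.2 (Or.inl (one_half_pos.trans (hre z hz)))
  have hderiv (z : ℂ) (hz : z ∈ ball (0 : ℂ) 1) := hasDerivAt_inv_one_sub_mul_log (hslit z hz)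
  have hw₁ (z : ℂ) (hz₀ : z ≠ 0) : (1 - z)⁻¹ ≠ 1 := by simpa [inv_eq_one, sub_eq_self]
  have hlog2 : 1 / 2 < 1 / (2 * Real.log 2) := by
    rw [lt_div_iff₀ (by positivity)]
    linarith [Real.log_two_lt_d9]
  refine ⟨fun z hz => (hderiv z hz).differentiableAt.differentiableWithinAt, by simp,
    by simp [(hderiv 0 (mem_ball_self one_pos)).deriv], fun z hz hz₀ => ?_, by linarith,
    fun z hz hz₀ => ?_⟩
  · have hw₀ := Complex.slitPlane_ne_zero (hslit z hz)
    exact mul_ne_zero hw₀ (Complex.log_ne_zero_of_ne_one hw₀ (hw₁ z hz₀))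
  · have hkey := Complex.sub_one_div_log_lt_re one_half_pos (by norm_num) (hre z hz) (hw₁ z hz₀)
    rw [show ((1 : ℝ) / 2 - 1) / Real.log (1 / 2) = 1 / (2 * Real.log 2) by
      rw [one_div, Real.log_inv]; field_simp; ring] at hkey
    rw [mul_deriv_div_inv_one_sub_mul_log (hslit z hz) hz₀, Complex.add_re, Complex.sub_re,
      Complex.one_re]
    linarith [hre z hz]
end

section
/- For θ ∈ (0, π/2) define Q(θ) = ( (log cos θ)² + θ² ) / ( θ·tan θ + log cos θ ). Then the denominator θ·tan θ + log cos θ is positive on (0, π/2), lim_{θ→0+} Q(θ) = 2, lim_{θ→π/2−} Q(θ) = 0, and Q is bounded on (0, π/2). -/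
open Set Filter Topology

/-!
Multiplying the denominator by `c = cos θ` gives `θ sin θ + c log c`, which is positive because
`c log c > c - 1` and `1 - cos θ ≤ θ² / 2 ≤ θ sin θ` (Jordan's inequality `sin θ ≥ 2θ/π`).
Near `0`, L'Hôpital's rule gives `log cos θ ~ -θ² / 2`, so the numerator is `~ θ²` and the
denominator `~ θ² / 2`. Near `π / 2`, after multiplying by `c` the numerator `c log² c + c θ²`
tends to `0` while the denominator tends to `π / 2`. Boundedness then follows from continuity on
the open interval together with the finite limits at both ends.
-/

open Real

noncomputable def logCosQuotient (θ : ℝ) : ℝ :=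
  (log (cos θ) ^ 2 + θ ^ 2) / (θ * tan θ + log (cos θ))

lemma tendsto_mul_log_pow_nhdsGT_zero (n : ℕ) :
    Tendsto (fun x : ℝ => x * log x ^ n) (𝓝[>] 0) (𝓝 0) := by
  -- substitute `t = -log x`, so that `x = exp (-t)`
  have h := ((tendsto_pow_mul_exp_neg_atTop_nhds_zero n).comp
    (tendsto_neg_atBot_atTop.comp tendsto_log_nhdsGT_zero)).const_mul ((-1 : ℝ) ^ n)
  rw [mul_zero] at h
  refine h.congr' ?_
  filter_upwards [self_mem_nhdsWithin] with x (hx : 0 < x)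
  have hsign : (-1 : ℝ) ^ n * (-1) ^ n = 1 := by rw [← mul_pow]; norm_num
  simp only [Function.comp_apply, neg_neg, exp_log hx, neg_pow (log x)]
  linear_combination (x * log x ^ n) * hsign

lemma tendsto_tan_div_self_nhdsNE_zero : Tendsto (fun x => tan x / x) (𝓝[≠] 0) (𝓝 1) := by
  have h := (hasDerivAt_tan (x := 0) (by simp)).tendsto_slope_zero
  simp only [cos_zero, zero_add, tan_zero, sub_zero, smul_eq_mul] at h
  simpa [inv_mul_eq_div] using h

lemma tendsto_log_cos_nhds_zero : Tendsto (fun x => log (cos x)) (𝓝 0) (𝓝 0) := by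
  simpa using (continuous_cos.continuousAt.log (by simp)).tendsto (x := (0 : ℝ))

lemma tendsto_log_cos_div_sq_nhdsNE_zero :
    Tendsto (fun x => log (cos x) / x ^ 2) (𝓝[≠] 0) (𝓝 (-1 / 2)) := by
  have hcos : ∀ᶠ x in 𝓝[≠] (0 : ℝ), cos x ≠ 0 :=
    nhdsWithin_le_nhds <| continuous_cos.continuousAt.eventually_ne (by simp)
  refine HasDerivAt.lhopital_zero_nhdsNE (f' := fun x => -sin x / cos x) (g' := fun x => 2 * x)
    (hcos.mono fun x hx => by simpa using (hasDerivAt_cos x).log hx)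
    (Eventually.of_forall fun x => by simpa using hasDerivAt_pow 2 x)
    (eventually_mem_nhdsWithin.mono fun x (hx : x ≠ 0) => by simpa using hx)
    (tendsto_log_cos_nhds_zero.mono_left nhdsWithin_le_nhds) ?_ ?_
  · simpa using ((continuous_pow 2).tendsto (0 : ℝ)).mono_left nhdsWithin_le_nhds
  · have h := tendsto_tan_div_self_nhdsNE_zero.const_mul (-1 / 2)
    rw [mul_one] at h
    refine h.congr fun x => ?_
    rw [tan_eq_sin_div_cos]
    ring

lemma one_sub_cos_le_mul_sin {x : ℝ} (h0 : 0 ≤ x) (h1 : x ≤ π / 2) : 1 - cos x ≤ x * sin x := by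
  have hπ : 1 / 2 ≤ 2 / π := by rw [le_div_iff₀ pi_pos]; linarith [pi_le_four]
  nlinarith [one_sub_sq_div_two_le_cos (x := x), mul_le_sin h0 h1, sq_nonneg x]

lemma cos_mul_mul_tan_add_log_cos {x : ℝ} (hx : cos x ≠ 0) :
    cos x * (x * tan x + log (cos x)) = x * sin x + cos x * log (cos x) := by
  rw [tan_eq_sin_div_cos]
  field_simp

lemma cos_pos_of_mem_Ioo_zero_pi_div_two {x : ℝ} (hx : x ∈ Ioo 0 (π / 2)) : 0 < cos x :=
  cos_pos_of_mem_Ioo ⟨by linarith [hx.1, pi_pos], hx.2⟩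

lemma mul_tan_add_log_cos_pos {x : ℝ} (hx : x ∈ Ioo 0 (π / 2)) :
    0 < x * tan x + log (cos x) := by
  have hc := cos_pos_of_mem_Ioo_zero_pi_div_two hx
  have hc1 : cos x ≠ 1 := fun h =>
    hx.1.ne' ((cos_eq_one_iff_of_lt_of_lt (by linarith [hx.1, pi_pos])
      (by linarith [hx.2, pi_pos])).mp h)
  refine pos_of_mul_pos_right ?_ hc.le
  rw [cos_mul_mul_tan_add_log_cos hc.ne']
  linarith [self_sub_one_lt_mul_log hc.le hc1, one_sub_cos_le_mul_sin hx.1.le hx.2.le]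

lemma tendsto_logCosQuotient_nhdsNE_zero : Tendsto logCosQuotient (𝓝[≠] 0) (𝓝 2) := by
  have hL := tendsto_log_cos_div_sq_nhdsNE_zero
  have h := (((tendsto_log_cos_nhds_zero.mono_left nhdsWithin_le_nhds).mul hL).add_const 1).div
    (tendsto_tan_div_self_nhdsNE_zero.add hL) (by norm_num)
  rw [show ((0 : ℝ) * (-1 / 2) + 1) / (1 + -1 / 2) = 2 by norm_num] at h
  refine h.congr' ?_
  filter_upwards [self_mem_nhdsWithin] with x (hx : x ≠ 0)
  rw [Pi.div_apply, logCosQuotient]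
  field_simp

lemma tendsto_logCosQuotient_nhdsLT_pi_div_two :
    Tendsto logCosQuotient (𝓝[<] (π / 2)) (𝓝 0) := by
  have hcos := tendsto_cos_pi_div_two
  have hnum : Tendsto (fun x => cos x * log (cos x) ^ 2 + cos x * x ^ 2) (𝓝[<] (π / 2)) (𝓝 0) := by
    simpa using ((tendsto_mul_log_pow_nhdsGT_zero 2).comp hcos).add
      ((hcos.mono_right nhdsWithin_le_nhds).mul
        (((continuous_pow 2).tendsto (π / 2)).mono_left nhdsWithin_le_nhds))
  have hden : Tendsto (fun x => x * sin x + cos x * log (cos x) ^ 1) (𝓝[<] (π / 2))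
      (𝓝 (π / 2 * sin (π / 2) + 0)) :=
    ((continuous_id.mul continuous_sin).tendsto _).mono_left nhdsWithin_le_nhds |>.add
      ((tendsto_mul_log_pow_nhdsGT_zero 1).comp hcos)
  have h := hnum.div hden (by simp [pi_ne_zero])
  rw [zero_div] at h
  refine h.congr' ?_
  filter_upwards [Ioo_mem_nhdsLT pi_div_two_pos] with x hx
  have hc := (cos_pos_of_mem_Ioo_zero_pi_div_two hx).ne'
  rw [Pi.div_apply, logCosQuotient, pow_one, ← cos_mul_mul_tan_add_log_cos hc, ← mul_add,
    mul_div_mul_left _ _ hc]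

lemma continuousOn_logCosQuotient : ContinuousOn logCosQuotient (Ioo 0 (π / 2)) := by
  intro x hx
  have hc := (cos_pos_of_mem_Ioo_zero_pi_div_two hx).ne'
  have hlog : ContinuousAt (fun x => log (cos x)) x := continuous_cos.continuousAt.log hc
  exact (((hlog.pow 2).add (continuousAt_id.pow 2)).div
    ((continuousAt_id.mul (continuousAt_tan.mpr hc)).add hlog)
    (mul_tan_add_log_cos_pos hx).ne').continuousWithinAt

lemma exists_norm_le_of_continuousOn_Ioo {α E : Type*} [TopologicalSpace α] [LinearOrder α]
    [DenselyOrdered α] [OrderTopology α] [CompactIccSpace α] [NormedAddCommGroup E]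
    {f : α → E} {a b : α} {la lb : E} (hf : ContinuousOn f (Ioo a b))
    (ha : Tendsto f (𝓝[>] a) (𝓝 la)) (hb : Tendsto f (𝓝[<] b) (𝓝 lb)) :
    ∃ K, ∀ x ∈ Ioo a b, ‖f x‖ ≤ K := by
  obtain ⟨K, hK⟩ :=
    isCompact_Icc.exists_bound_of_continuousOn (continuousOn_Icc_extendFrom_Ioo hf ha hb)
  exact ⟨K, fun x hx => extendFrom_extends hf x hx ▸ hK x (Ioo_subset_Icc_self hx)⟩

/-- for `Q(θ) = ((log cos θ)² + θ²)/(θ·tan θ + log cos θ)` on `(0, π/2)`,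
the denominator is positive, `Q(θ) → 2` as `θ → 0+`, `Q(θ) → 0` as `θ → π/2−`, and `Q`
is bounded on `(0, π/2)`. -/
theorem Q_properties (Q : ℝ → ℝ)
    (hQ : Q = fun θ : ℝ =>
      ((Real.log (Real.cos θ)) ^ 2 + θ ^ 2) /
        (θ * Real.tan θ + Real.log (Real.cos θ))) :
    (∀ θ ∈ Set.Ioo (0 : ℝ) (Real.pi / 2),
      0 < θ * Real.tan θ + Real.log (Real.cos θ)) ∧
    Tendsto Q (𝓝[>] (0 : ℝ)) (𝓝 2) ∧
    Tendsto Q (𝓝[<] (Real.pi / 2)) (𝓝 0) ∧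
    ∃ K : ℝ, ∀ θ ∈ Set.Ioo (0 : ℝ) (Real.pi / 2), |Q θ| ≤ K := by
  obtain rfl : Q = logCosQuotient := hQ
  have h0 := tendsto_logCosQuotient_nhdsNE_zero.mono_left (nhdsGT_le_nhdsNE 0)
  exact ⟨fun θ hθ => mul_tan_add_log_cos_pos hθ, h0, tendsto_logCosQuotient_nhdsLT_pi_div_two,
    exists_norm_le_of_continuousOn_Ioo continuousOn_logCosQuotient h0
      tendsto_logCosQuotient_nhdsLT_pi_div_two⟩
end
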